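/- arXiv:math/0210216 — 4 statements merged into one kernel-verified Lean document; each statement's English description precedes it below -/
import Mathlib

section
/- Define in p-representation β̌_k = Σ_r (∇_r Ǔ_k) V^r + Σ_r (∂Ǔ_k/∂p_r) Q_r + Σ_r (∇_k V^r) Ǔ_r + Σ_r (∇_k Q_r) W^r − Σ_{r,s,m} (Ř^s_{rmk} V^m − Ď^{sm}_{rk} Q_m) W^r p_s. Then for every point (x,v) and all k: β̌_k(x, L(x,v)) = β_k(x,v), where β_k is the v-representation expression given in the context. -/
/- Coordinate formalization of extended tensor fields in v- and p-representation
   for a generalized Legendre transformation λ(x,v) = (x, L(x,v)). -/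

noncomputable section

open scoped BigOperators

/-- A point of the (co)tangent bundle in a single chart: a pair (x, v) or (x, p). -/
abbrev Pt (n : ℕ) := (Fin n → ℝ) × (Fin n → ℝ)

/-- An indexed family of scalar functions (components of a (co)vector field). -/
abbrev Fam (n : ℕ) := Fin n → Pt n → ℝ

/-- Components Γ^k_{ij} of an extended connection (or of a gauge tensor T^k_{ij}). -/
abbrev Conn (n : ℕ) := Fin n → Fin n → Fin n → Pt n → ℝ

variable {n : ℕ}

/-- Kronecker delta δ^i_j. -/
def kron (i j : Fin n) : ℝ := if i = j then 1 else 0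

/-- Partial derivative ∂f/∂x^m (first slot). -/
def pdx (m : Fin n) (f : Pt n → ℝ) (q : Pt n) : ℝ :=
  fderiv ℝ f q (Pi.single m 1, 0)

/-- Partial derivative ∂f/∂v^m (resp. ∂f/∂p_m): second slot. -/
def pdv (m : Fin n) (f : Pt n → ℝ) (q : Pt n) : ℝ :=
  fderiv ℝ f q (0, Pi.single m 1)

/-- The generalized Legendre transformation λ(x,v) = (x, L(x,v)). -/
def lam (L : Fam n) (q : Pt n) : Pt n := (q.1, fun i => L i q)

/-- The inverse map λ⁻¹(x,p) = (x, V(x,p)). -/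
def lamInv (V : Fam n) (q : Pt n) : Pt n := (q.1, fun i => V i q)

/-- g_{rk} = ∂L_r/∂v^k. -/
def gdn (L : Fam n) (r k : Fin n) (q : Pt n) : ℝ := pdv k (L r) q

/-- L^i = Σ_q L_q g^{qi}. -/
def Lup (L : Fam n) (ginv : Fin n → Fin n → Pt n → ℝ) (i : Fin n) (q : Pt n) : ℝ :=
  ∑ j, L j q * ginv j i q

/-- |L|² = Σ_s L_s L^s. -/
def L2 (L : Fam n) (ginv : Fin n → Fin n → Pt n → ℝ) (q : Pt n) : ℝ :=
  ∑ s, L s q * Lup L ginv s q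

/-- p-representation: W^i = Σ_s p_s ∂V^s/∂p_i. -/
def Wp (V : Fam n) (i : Fin n) (q : Pt n) : ℝ :=
  ∑ s, q.2 s * pdv i (V s) q

/-- p-representation: Ω = Σ_s p_s W^s. -/
def Omga (V : Fam n) (q : Pt n) : ℝ := ∑ s, q.2 s * Wp V s q

/-- p-representation projector P̌^i_j = δ^i_j − W^i p_j / Ω. -/
def Pp (V : Fam n) (i j : Fin n) (q : Pt n) : ℝ :=
  kron i j - Wp V i q * q.2 j / Omga V q

/-- v-representation projector P^i_j = δ^i_j − L^i L_j / |L|². -/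
def Pv (L : Fam n) (ginv : Fin n → Fin n → Pt n → ℝ) (i j : Fin n) (q : Pt n) : ℝ :=
  kron i j - Lup L ginv i q * L j q / L2 L ginv q

/-- Scalar part of the v-representation horizontal covariant derivative:
    ∂f/∂x^m − Σ_{a,b} v^a Γ^b_{am} ∂f/∂v^b. -/
def vS (Γ : Conn n) (m : Fin n) (f : Pt n → ℝ) (q : Pt n) : ℝ :=
  pdx m f q - ∑ a, ∑ b, q.2 a * Γ b a m q * pdv b f q

/-- v-representation ∇_m X_j of a covector field. -/
def vCov (Γ : Conn n) (m : Fin n) (X : Fam n) (j : Fin n) (q : Pt n) : ℝ :=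
  vS Γ m (X j) q - ∑ b, Γ b m j q * X b q

/-- v-representation ∇_m X^i of a vector field. -/
def vVec (Γ : Conn n) (m : Fin n) (X : Fam n) (i : Fin n) (q : Pt n) : ℝ :=
  vS Γ m (X i) q + ∑ a, Γ i m a q * X a q

/-- v-representation ∇_k Y_{m r} of a (0,2) tensor field. -/
def vCov2 (Γ : Conn n) (k : Fin n) (Y : Fin n → Fin n → Pt n → ℝ)
    (m r : Fin n) (q : Pt n) : ℝ :=
  vS Γ k (Y m r) q - (∑ b, Γ b k m q * Y b r q) - (∑ b, Γ b k r q * Y m b q)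

/-- v-representation ∇_m T^k_{ij} of a (1,2) tensor field. -/
def vT12 (Γ : Conn n) (m : Fin n) (T : Conn n) (k i j : Fin n) (q : Pt n) : ℝ :=
  vS Γ m (T k i j) q + (∑ a, Γ k m a q * T a i j q)
    - (∑ b, Γ b m i q * T k b j q) - (∑ b, Γ b m j q * T k i b q)

/-- Connection components in p-representation: Γ^k_{ij} ∘ λ⁻¹. -/
def Gp (Γ : Conn n) (V : Fam n) (k i j : Fin n) (q : Pt n) : ℝ :=
  Γ k i j (lamInv V q)

/-- Scalar part of the p-representation horizontal covariant derivative: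
    ∂f/∂x^m + Σ_{a,b} p_a Γ^a_{mb} ∂f/∂p_b. -/
def pS (G : Conn n) (m : Fin n) (f : Pt n → ℝ) (q : Pt n) : ℝ :=
  pdx m f q + ∑ a, ∑ b, q.2 a * G a m b q * pdv b f q

/-- p-representation ∇_m X_j of a covector field. -/
def pCov (G : Conn n) (m : Fin n) (X : Fam n) (j : Fin n) (q : Pt n) : ℝ :=
  pS G m (X j) q - ∑ b, G b m j q * X b q

/-- p-representation ∇_m X^i of a vector field. -/
def pVec (G : Conn n) (m : Fin n) (X : Fam n) (i : Fin n) (q : Pt n) : ℝ :=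
  pS G m (X i) q + ∑ a, G i m a q * X a q

/-- Force vector F^i = Φ^i + Σ_{j,k} Γ^i_{jk} v^j v^k. -/
def Fvec (Γ : Conn n) (Φ : Fam n) (i : Fin n) (q : Pt n) : ℝ :=
  Φ i q + ∑ j, ∑ k, Γ i j k q * q.2 j * q.2 k

/-- Force covector F_q = Σ_i g_{qi} F^i. -/
def Fcov (L : Fam n) (Γ : Conn n) (Φ : Fam n) (i : Fin n) (q : Pt n) : ℝ :=
  ∑ j, gdn L i j q * Fvec Γ Φ j q

/-- p-representation force covector Q_i = Θ_i − Σ_{j,k} Γ^k_{ij} V^j p_k. -/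
def Qp (Θ : Fam n) (Γ : Conn n) (V : Fam n) (i : Fin n) (q : Pt n) : ℝ :=
  Θ i q - ∑ j, ∑ k, Gp Γ V k i j q * V j q * q.2 k

/-- p-representation covector Ǔ_i = Q_i + Σ_s (∇_i V^s) p_s. -/
def Ucheck (Θ : Fam n) (Γ : Conn n) (V : Fam n) (i : Fin n) (q : Pt n) : ℝ :=
  Qp Θ Γ V i q + ∑ s, pVec (Gp Γ V) i V s q * q.2 s

/-- v-representation covector U_i = Σ_q v^q ∇_q L_i − Σ_q L^q ∇_i L_q + F_i. -/
def Uv (L : Fam n) (ginv : Fin n → Fin n → Pt n → ℝ) (Γ : Conn n) (Φ : Fam n)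
    (i : Fin n) (q : Pt n) : ℝ :=
  (∑ j, q.2 j * vCov Γ j L i q) - (∑ j, Lup L ginv j q * vCov Γ i L j q) + Fcov L Γ Φ i q

/-- v-representation dynamic curvature tensor D^k_{rij} = −∂Γ^k_{ir}/∂v^j. -/
def Dv (Γ : Conn n) (k r i j : Fin n) (q : Pt n) : ℝ := -(pdv j (Γ k i r) q)

/-- v-representation curvature tensor R^k_{rij}. -/
def Rv (Γ : Conn n) (k r i j : Fin n) (q : Pt n) : ℝ :=
  pdx i (Γ k j r) q - pdx j (Γ k i r) q
  + (∑ m, (Γ k i m q * Γ m j r q - Γ k j m q * Γ m i r q))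
  - (∑ m, ∑ s, q.2 s * Γ m i s q * pdv m (Γ k j r) q)
  + (∑ m, ∑ s, q.2 s * Γ m j s q * pdv m (Γ k i r) q)

/-- p-representation dynamic curvature tensor Ď^{kr}_{ij} = −∂Γ^k_{ij}/∂p_r. -/
def Dp (G : Conn n) (k r i j : Fin n) (q : Pt n) : ℝ := -(pdv r (G k i j) q)

/-- p-representation curvature tensor Ř^k_{rij}. -/
def Rp (G : Conn n) (k r i j : Fin n) (q : Pt n) : ℝ :=
  pdx i (G k j r) q - pdx j (G k i r) q
  + (∑ m, (G k i m q * G m j r q - G k j m q * G m i r q))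
  + (∑ m, ∑ s, q.2 s * G s m i q * pdv m (G k j r) q)
  - (∑ m, ∑ s, q.2 s * G s m j q * pdv m (G k i r) q)

/-- p-representation vector field α̌^k. -/
def alphaCheck (Θ : Fam n) (Γ : Conn n) (V : Fam n) (k : Fin n) (q : Pt n) : ℝ :=
  (∑ r, pdv k (V r) q * Ucheck Θ Γ V r q)
  + (∑ r, pVec (Gp Γ V) r (Wp V) k q * V r q)
  + (∑ r, pdv r (Wp V k) q * Qp Θ Γ V r q)
  + (∑ r, Wp V r q * pdv k (Qp Θ Γ V r) q)
  - (∑ r, ∑ s, ∑ j, q.2 s * Dp (Gp Γ V) s k r j q * Wp V r q * V j q)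

/-- v-representation vector field α^k. -/
def alphaV (L : Fam n) (ginv : Fin n → Fin n → Pt n → ℝ) (Γ : Conn n) (Φ : Fam n)
    (k : Fin n) (q : Pt n) : ℝ :=
  (∑ r, ginv r k q * Uv L ginv Γ Φ r q)
  + (∑ r, q.2 r * vVec Γ r (Lup L ginv) k q)
  + (∑ j, Fvec Γ Φ j q * pdv j (Lup L ginv k) q)
  + (∑ j, ∑ r, ∑ s, Lup L ginv r q * ginv j k q * q.2 s * pdv j (vCov Γ s L r) q)
  + (∑ j, ∑ r, Lup L ginv r q * ginv j k q * pdv j (Fcov L Γ Φ r) q)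
  + (∑ j, ∑ r, Lup L ginv r q * ginv j k q * vCov Γ j L r q)
  - (∑ j, ∑ m, ∑ r, ∑ s, ginv m k q * L s q * Dv Γ s r j m q * Lup L ginv r q * q.2 j)

/-- p-representation covector field β̌_k. -/
def betaCheck (Θ : Fam n) (Γ : Conn n) (V : Fam n) (k : Fin n) (q : Pt n) : ℝ :=
  (∑ r, pCov (Gp Γ V) r (Ucheck Θ Γ V) k q * V r q)
  + (∑ r, pdv r (Ucheck Θ Γ V k) q * Qp Θ Γ V r q)
  + (∑ r, pVec (Gp Γ V) k V r q * Ucheck Θ Γ V r q)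
  + (∑ r, pCov (Gp Γ V) k (Qp Θ Γ V) r q * Wp V r q)
  - (∑ r, ∑ s, ∑ m, (Rp (Gp Γ V) s r m k q * V m q
      - Dp (Gp Γ V) s m r k q * Qp Θ Γ V m q) * Wp V r q * q.2 s)

/-- v-representation covector field β_k. -/
def betaV (L : Fam n) (ginv : Fin n → Fin n → Pt n → ℝ) (Γ : Conn n) (Φ : Fam n)
    (k : Fin n) (q : Pt n) : ℝ :=
  (∑ r, q.2 r * vCov Γ r (Uv L ginv Γ Φ) k q)
  + (∑ j, Fvec Γ Φ j q * pdv j (Uv L ginv Γ Φ k) q)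
  - (∑ j, ∑ r, ∑ s, vCov Γ k L j q * ginv r j q * q.2 s * vCov Γ s L r q)
  - (∑ j, ∑ r, vCov Γ k L j q * ginv r j q * Fcov L Γ Φ r q)
  + (∑ r, Lup L ginv r q * vCov Γ k (Fcov L Γ Φ) r q)
  + (∑ m, ∑ r, Lup L ginv r q * q.2 m * vCov2 Γ k (fun m' r' => vCov Γ m' L r') m r q)
  - (∑ j, ∑ r, ∑ s, Lup L ginv r q * vCov Γ k L j q * ginv s j q * pdv s (Fcov L Γ Φ r) q)
  - (∑ j, ∑ m, ∑ r, ∑ s, Lup L ginv r q * vCov Γ k L j q * ginv s j q * q.2 m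
      * pdv s (vCov Γ m L r) q)
  - (∑ r, ∑ s, ∑ m, Rv Γ s r m k q * q.2 m * Lup L ginv r q * L s q)
  + (∑ j, ∑ r, ∑ s, ∑ m, ∑ a, ginv a j q * vCov Γ k L j q * Dv Γ s m r a q * q.2 m
      * Lup L ginv r q * L s q)
  + (∑ r, ∑ s, ∑ m, ∑ a, ginv a m q * Dv Γ s r k a q * Fcov L Γ Φ m q
      * Lup L ginv r q * L s q)

/-- v-representation covector field η_k = β_k − Σ_s U_k α^s L_s / |L|². -/
def etaV (L : Fam n) (ginv : Fin n → Fin n → Pt n → ℝ) (Γ : Conn n) (Φ : Fam n)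
    (k : Fin n) (q : Pt n) : ℝ :=
  betaV L ginv Γ Φ k q
    - ∑ s, Uv L ginv Γ Φ k q * alphaV L ginv Γ Φ s q * L s q / L2 L ginv q

/-- p-representation tensor Ǎ^{rs} = ∂W^s/∂p_r. -/
def Acheck (V : Fam n) (r s : Fin n) (q : Pt n) : ℝ := pdv r (Wp V s) q

/-- v-representation tensor A^{rs} = Σ_q g^{qr} ∂L^s/∂v^q. -/
def Av (L : Fam n) (ginv : Fin n → Fin n → Pt n → ℝ) (r s : Fin n) (q : Pt n) : ℝ :=
  ∑ j, ginv j r q * pdv j (Lup L ginv s) q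

/-- p-representation tensor B̌^r_s. -/
def Bcheck (Θ : Fam n) (Γ : Conn n) (V : Fam n) (r s : Fin n) (q : Pt n) : ℝ :=
  pdv r (Ucheck Θ Γ V s) q
  + (∑ m, ∑ k, Wp V k q * q.2 m * Dp (Gp Γ V) m r k s q)
  - pVec (Gp Γ V) s (Wp V) r q
  + (∑ m, (pdv m (Wp V r) q - pdv r (Wp V m) q) * Ucheck Θ Γ V s q * q.2 m / Omga V q)

/-- v-representation tensor B^r_s. -/
def Bv (L : Fam n) (ginv : Fin n → Fin n → Pt n → ℝ) (Γ : Conn n) (Φ : Fam n)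
    (r s : Fin n) (q : Pt n) : ℝ :=
  (∑ j, ginv j r q * pdv j (Uv L ginv Γ Φ s) q)
  + (∑ m, ∑ k, ∑ j, ginv j r q * Lup L ginv k q * L m q * Dv Γ m k s j q)
  - vVec Γ s (Lup L ginv) r q
  + (∑ j, ∑ k, vCov Γ s L k q * ginv j k q * pdv j (Lup L ginv r) q)
  + (∑ j, ∑ m, (ginv j m q * pdv j (Lup L ginv r) q - ginv j r q * pdv j (Lup L ginv m) q)
      * Uv L ginv Γ Φ s q * L m q / L2 L ginv q)

/-- p-representation tensor Č_{rs}. -/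
def Ccheck (Θ : Fam n) (Γ : Conn n) (V : Fam n) (r s : Fin n) (q : Pt n) : ℝ :=
  pCov (Gp Γ V) r (Ucheck Θ Γ V) s q
  - (∑ m, (Ucheck Θ Γ V r q * pdv m (Ucheck Θ Γ V s) q
      + Ucheck Θ Γ V s q * pVec (Gp Γ V) r (Wp V) m q) * q.2 m / Omga V q)
  - (∑ k, ∑ j, ((∑ m, Dp (Gp Γ V) m j k s q * Ucheck Θ Γ V r q * q.2 m / Omga V q)
      + Rp (Gp Γ V) j k r s q / 2) * Wp V k q * q.2 j)

/-- v-representation tensor C_{rs}. -/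
def Cv (L : Fam n) (ginv : Fin n → Fin n → Pt n → ℝ) (Γ : Conn n) (Φ : Fam n)
    (r s : Fin n) (q : Pt n) : ℝ :=
  vCov Γ r (Uv L ginv Γ Φ) s q
  - (∑ j, ∑ k, vCov Γ r L j q * ginv k j q * pdv k (Uv L ginv Γ Φ s) q)
  - (∑ m, Uv L ginv Γ Φ s q * vVec Γ r (Lup L ginv) m q * L m q / L2 L ginv q)
  - (∑ j, ∑ m, Uv L ginv Γ Φ r q * ginv j m q * pdv j (Uv L ginv Γ Φ s) q * L m q
      / L2 L ginv q)
  + (∑ m, ∑ j, ∑ k, Uv L ginv Γ Φ s q * vCov Γ r L k q * ginv j k q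
      * pdv j (Lup L ginv m) q * L m q / L2 L ginv q)
  - (∑ k, ∑ j, ∑ m, ∑ a, ginv a j q * Dv Γ m k s a q * Uv L ginv Γ Φ r q * L m q
      * Lup L ginv k q * L j q / L2 L ginv q)
  - (∑ k, ∑ j, (Rv Γ j k r s q / 2) * Lup L ginv k q * L j q)
  - (∑ k, ∑ j, ∑ m, ∑ a, vCov Γ r L m q * Dv Γ j k s a q * ginv a m q
      * Lup L ginv k q * L j q)

/-- Gauge-transformed connection Γ' = Γ + T. -/
def addT (Γ T : Conn n) : Conn n := fun k i j q => Γ k i j q + T k i j q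

/-- The quantity Ξ_{rs} appearing in the gauge transformation rule for C. -/
def XiG (L : Fam n) (ginv : Fin n → Fin n → Pt n → ℝ) (Γ : Conn n) (Φ : Fam n)
    (T : Conn n) (r s : Fin n) (q : Pt n) : ℝ :=
  (∑ j, ∑ b, ∑ m, T b r j q * L b q * Pv L ginv j m q * Bv L ginv Γ Φ m s q)
  + (∑ j, ∑ b, ∑ m, ∑ a, ∑ c, ∑ e, T b r j q * L b q * Pv L ginv j m q
      * Av L ginv m a q * Pv L ginv c a q * T e s c q * L e q)

end

/-!
Every p-representation quantity is pulled back along `λ`. From `λ⁻¹ ∘ λ = id` we get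
`V ∘ λ = v` and `Γ̌ ∘ λ = Γ`, and inverting the chain rule with `g⁻¹` expresses `∂/∂p_b` at
`λ(x,v)` as `g^{jb} ∂/∂v^j` of the pulled-back function. Hence the p-horizontal derivative at
`λ(x,v)` is the v-horizontal derivative of the pullback minus the correction
`g^{js} (∇_m L_s) ∂/∂v^j`, and `W ∘ λ = L^i`, `Q_r ∘ λ = v^m ∇_m L_r + F_r`, `Ǔ ∘ λ = U`,
`Ď ∘ λ = g⁻¹ D`, `Ř ∘ λ = R + (g⁻¹ ∇L) D`. Substituted into the five terms of `β̌`: the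
corrections in the first two terms cancel each other, the term `g^{rm} ∇_k L_m L^a ∇_r L_a`
appears with opposite signs in the third and fourth, and in the curvature term the
`D`-contributions carrying `v^m ∇_m L` cancel by the symmetry of `Γ`. What is left is `β`.
-/

namespace LegendreTransport

variable {n : ℕ}

section Reindexing

variable {α β γ M : Type*} [Fintype α] [Fintype β] [Fintype γ] [AddCommMonoid M]

lemma sum_rotate_left (f : α → β → γ → M) :
    ∑ a, ∑ b, ∑ c, f a b c = ∑ b, ∑ c, ∑ a, f a b c := by
  rw [Finset.sum_comm]
  exact Finset.sum_congr rfl fun _ _ => Finset.sum_comm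

lemma sum_rotate_right (f : α → β → γ → M) :
    ∑ a, ∑ b, ∑ c, f a b c = ∑ c, ∑ a, ∑ b, f a b c := by
  rw [Finset.sum_congr rfl fun _ _ => Finset.sum_comm]
  exact Finset.sum_comm

lemma sum_reverse (f : α → β → γ → M) :
    ∑ a, ∑ b, ∑ c, f a b c = ∑ c, ∑ b, ∑ a, f a b c := by
  rw [sum_rotate_right]
  exact Finset.sum_congr rfl fun _ _ => Finset.sum_comm

end Reindexing

lemma sum_kron_mul (i : Fin n) (f : Fin n → ℝ) : ∑ j, kron i j * f j = f i := by
  simp [kron]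

lemma sum_mul_kron (i : Fin n) (f : Fin n → ℝ) : ∑ j, f j * kron j i = f i := by
  simp [kron]

lemma sum_mul_kron' (i : Fin n) (f : Fin n → ℝ) : ∑ j, f j * kron i j = f i := by
  simp [kron]

section Calculus

lemma differentiableAt_of_contDiff {E F : Type*} [NormedAddCommGroup E] [NormedSpace ℝ E]
    [NormedAddCommGroup F] [NormedSpace ℝ F] {f : E → F} (hf : ContDiff ℝ (⊤ : ℕ∞) f)
    (q : E) :
    DifferentiableAt ℝ f q :=
  (hf.differentiable (by simp)).differentiableAt

@[fun_prop]
lemma contDiff_pdx (m : Fin n) {f : Pt n → ℝ} (hf : ContDiff ℝ (⊤ : ℕ∞) f) :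
    ContDiff ℝ (⊤ : ℕ∞) (pdx m f) :=
  (ContinuousLinearMap.apply ℝ ℝ _).contDiff.comp (hf.fderiv_right (by exact_mod_cast le_top))

@[fun_prop]
lemma contDiff_pdv (m : Fin n) {f : Pt n → ℝ} (hf : ContDiff ℝ (⊤ : ℕ∞) f) :
    ContDiff ℝ (⊤ : ℕ∞) (pdv m f) :=
  (ContinuousLinearMap.apply ℝ ℝ _).contDiff.comp (hf.fderiv_right (by exact_mod_cast le_top))

lemma fderiv_apply_snd (f : Pt n → ℝ) (p : Pt n) (w : Fin n → ℝ) :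
    fderiv ℝ f p (0, w) = ∑ b, w b * pdv b f p := by
  have hw : ((0 : Fin n → ℝ), w)
      = ∑ b, w b • (((0 : Fin n → ℝ), Pi.single b 1) : Pt n) := by
    ext j
    · simp [Prod.fst_sum]
    · simp [Prod.snd_sum, Finset.sum_apply, Pi.single_apply]
  rw [hw, map_sum]
  exact Finset.sum_congr rfl fun b _ => by rw [map_smul, smul_eq_mul, pdv]

lemma fderiv_apply_eq_add (f : Pt n → ℝ) (p : Pt n) (u w : Fin n → ℝ) :
    fderiv ℝ f p (u, w) = fderiv ℝ f p (u, 0) + fderiv ℝ f p (0, w) := by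
  rw [← map_add, Prod.mk_add_mk, add_zero, zero_add]

lemma fderiv_snd_apply (s : Fin n) (q w : Pt n) :
    fderiv ℝ (fun x : Pt n => x.2 s) q w = w.2 s := by
  have h : (fun x : Pt n => x.2 s) = (ContinuousLinearMap.proj s).comp
      (ContinuousLinearMap.snd ℝ (Fin n → ℝ) (Fin n → ℝ)) := rfl
  rw [h, ContinuousLinearMap.fderiv]
  rfl

lemma pdx_snd (m s : Fin n) (q : Pt n) : pdx m (fun x : Pt n => x.2 s) q = 0 := by
  simp [pdx, fderiv_snd_apply]

lemma pdv_snd (j s : Fin n) (q : Pt n) : pdv j (fun x : Pt n => x.2 s) q = kron s j := by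
  simp [pdv, fderiv_snd_apply, kron, Pi.single_apply]

end Calculus

section Curvature

lemma Rp_eq_pS_sub_pS {G : Conn n} (hG : ∀ k i j q, G k i j q = G k j i q)
    (k r i j : Fin n) (q : Pt n) :
    Rp G k r i j q = pS G i (G k j r) q - pS G j (G k i r) q
      + ∑ m, (G k i m q * G m j r q - G k j m q * G m i r q) := by
  have h : ∀ (i : Fin n) (f : Pt n → ℝ), ∑ m, ∑ s, q.2 s * G s m i q * pdv m f q
      = ∑ a, ∑ b, q.2 a * G a i b q * pdv b f q := fun i f => by
    rw [Finset.sum_comm]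
    simp only [hG _ i]
  rw [Rp, pS, pS, h, h]
  ring

lemma Rv_eq_vS_sub_vS {Γ : Conn n} (hΓsym : ∀ k i j q, Γ k i j q = Γ k j i q)
    (k r i j : Fin n) (q : Pt n) :
    Rv Γ k r i j q = vS Γ i (Γ k j r) q - vS Γ j (Γ k i r) q
      + ∑ m, (Γ k i m q * Γ m j r q - Γ k j m q * Γ m i r q) := by
  have h : ∀ (i : Fin n) (f : Pt n → ℝ), ∑ m, ∑ s, q.2 s * Γ m i s q * pdv m f q
      = ∑ a, ∑ b, q.2 a * Γ b a i q * pdv b f q := fun i f => by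
    rw [Finset.sum_comm]
    simp only [hΓsym _ i]
  rw [Rv, vS, vS, h, h]
  ring

end Curvature

section ForceCovector

noncomputable def Qv (L : Fam n) (Γ : Conn n) (Φ : Fam n) (r : Fin n) (q : Pt n) : ℝ :=
  ∑ m, q.2 m * vCov Γ m L r q + Fcov L Γ Φ r q

variable {L : Fam n} {Γ : Conn n} {Φ : Fam n}

lemma contDiff_vCov (hΓ : ∀ k i j, ContDiff ℝ (⊤ : ℕ∞) (Γ k i j)) {X : Fam n}
    (hX : ∀ i, ContDiff ℝ (⊤ : ℕ∞) (X i)) (m r : Fin n) :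
    ContDiff ℝ (⊤ : ℕ∞) (vCov Γ m X r) := by
  unfold vCov vS
  fun_prop

lemma contDiff_Fcov (hL : ∀ i, ContDiff ℝ (⊤ : ℕ∞) (L i))
    (hΓ : ∀ k i j, ContDiff ℝ (⊤ : ℕ∞) (Γ k i j))
    (hΦ : ∀ i, ContDiff ℝ (⊤ : ℕ∞) (Φ i)) (r : Fin n) :
    ContDiff ℝ (⊤ : ℕ∞) (Fcov L Γ Φ r) := by
  unfold Fcov Fvec gdn
  fun_prop

lemma fderiv_Qv_apply (hL : ∀ i, ContDiff ℝ (⊤ : ℕ∞) (L i))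
    (hΓ : ∀ k i j, ContDiff ℝ (⊤ : ℕ∞) (Γ k i j))
    (hΦ : ∀ i, ContDiff ℝ (⊤ : ℕ∞) (Φ i)) (r : Fin n) (q w : Pt n) :
    fderiv ℝ (Qv L Γ Φ r) q w
      = ∑ m, w.2 m * vCov Γ m L r q + ∑ m, q.2 m * fderiv ℝ (vCov Γ m L r) q w
        + fderiv ℝ (Fcov L Γ Φ r) q w := by
  have hv := fun m => differentiableAt_of_contDiff (contDiff_vCov hΓ hL m r) q
  have hF := differentiableAt_of_contDiff (contDiff_Fcov hL hΓ hΦ r) q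
  have hsnd : ∀ m, DifferentiableAt ℝ (fun x : Pt n => x.2 m) q := fun m => by fun_prop
  unfold Qv
  rw [fderiv_fun_add (by fun_prop) hF, fderiv_fun_sum fun m _ => by fun_prop]
  simp only [fderiv_fun_mul (hsnd _) (hv _), add_apply, smul_apply, smul_eq_mul,
    fderiv_snd_apply, FunLike.coe_sum, Finset.sum_apply, Finset.sum_add_distrib,
    mul_comm (vCov Γ _ L r q)]
  ring

lemma pdv_Qv (hL : ∀ i, ContDiff ℝ (⊤ : ℕ∞) (L i))
    (hΓ : ∀ k i j, ContDiff ℝ (⊤ : ℕ∞) (Γ k i j))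
    (hΦ : ∀ i, ContDiff ℝ (⊤ : ℕ∞) (Φ i)) (r j : Fin n) (q : Pt n) :
    pdv j (Qv L Γ Φ r) q
      = vCov Γ j L r q + ∑ m, q.2 m * pdv j (vCov Γ m L r) q + pdv j (Fcov L Γ Φ r) q := by
  simp only [pdv, fderiv_Qv_apply hL hΓ hΦ, Pi.single_apply, ite_mul, one_mul, zero_mul,
    Finset.sum_ite_eq', Finset.mem_univ, if_true]

lemma pdx_Qv (hL : ∀ i, ContDiff ℝ (⊤ : ℕ∞) (L i))
    (hΓ : ∀ k i j, ContDiff ℝ (⊤ : ℕ∞) (Γ k i j))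
    (hΦ : ∀ i, ContDiff ℝ (⊤ : ℕ∞) (Φ i)) (r k : Fin n) (q : Pt n) :
    pdx k (Qv L Γ Φ r) q = ∑ m, q.2 m * pdx k (vCov Γ m L r) q + pdx k (Fcov L Γ Φ r) q := by
  simp only [pdx, fderiv_Qv_apply hL hΓ hΦ, Pi.zero_apply, zero_mul, Finset.sum_const_zero,
    zero_add]

lemma vCov_Qv (hL : ∀ i, ContDiff ℝ (⊤ : ℕ∞) (L i))
    (hΓ : ∀ k i j, ContDiff ℝ (⊤ : ℕ∞) (Γ k i j))
    (hΓsym : ∀ (k i j : Fin n) (q : Pt n), Γ k i j q = Γ k j i q)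
    (hΦ : ∀ i, ContDiff ℝ (⊤ : ℕ∞) (Φ i)) (r k : Fin n) (q : Pt n) :
    vCov Γ k (Qv L Γ Φ) r q
      = ∑ m, q.2 m * vCov2 Γ k (fun m' r' => vCov Γ m' L r') m r q
        + vCov Γ k (Fcov L Γ Φ) r q := by
  have e1 : ∑ a, ∑ b, q.2 a * Γ b a k q * vCov Γ b L r q
      = ∑ m, ∑ b, q.2 m * (Γ b k m q * vCov Γ b L r q) := by
    simp only [hΓsym _ _ k, mul_assoc]
  have e2 : ∑ a, ∑ b, q.2 a * Γ b a k q * ∑ m, q.2 m * pdv b (vCov Γ m L r) q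
      = ∑ m, q.2 m * ∑ a, ∑ b, q.2 a * Γ b a k q * pdv b (vCov Γ m L r) q := by
    simp only [Finset.mul_sum]
    rw [sum_rotate_right]
    exact Finset.sum_congr rfl fun m _ => Finset.sum_congr rfl fun a _ =>
      Finset.sum_congr rfl fun b _ => by ring
  have e3 : ∑ b, Γ b k r q * ∑ m, q.2 m * vCov Γ m L b q
      = ∑ m, q.2 m * ∑ b, Γ b k r q * vCov Γ m L b q := by
    simp only [Finset.mul_sum]
    rw [Finset.sum_comm]
    exact Finset.sum_congr rfl fun m _ => Finset.sum_congr rfl fun b _ => by ring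
  have hQ : vCov Γ k (Qv L Γ Φ) r q
      = vS Γ k (Qv L Γ Φ r) q - ∑ b, Γ b k r q * Qv L Γ Φ b q := rfl
  have hF : vCov Γ k (Fcov L Γ Φ) r q
      = vS Γ k (Fcov L Γ Φ r) q - ∑ b, Γ b k r q * Fcov L Γ Φ b q := rfl
  rw [hQ, hF]
  simp only [vS, vCov2, pdx_Qv hL hΓ hΦ, pdv_Qv hL hΓ hΦ, Qv, mul_add, mul_sub,
    Finset.sum_add_distrib, Finset.sum_sub_distrib, Finset.mul_sum] at e1 e2 e3 ⊢
  linarith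

end ForceCovector

section Transport

variable {L : Fam n} {ginv : Fin n → Fin n → Pt n → ℝ}

lemma lam_snd (s : Fin n) (q : Pt n) : (lam L q).2 s = L s q := rfl

lemma fderiv_lam_apply (hL : ∀ i, ContDiff ℝ (⊤ : ℕ∞) (L i)) (q w : Pt n) :
    fderiv ℝ (lam L) q w = (w.1, fun b => fderiv ℝ (L b) q w) := by
  have hd : HasFDerivAt (lam L) ((ContinuousLinearMap.fst ℝ _ _).prod
      (ContinuousLinearMap.pi fun i => fderiv ℝ (L i) q)) q :=
    hasFDerivAt_fst.prodMk
      (hasFDerivAt_pi.2 fun i => (differentiableAt_of_contDiff (hL i) q).hasFDerivAt)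
  rw [hd.fderiv]
  rfl

lemma differentiableAt_lam (hL : ∀ i, ContDiff ℝ (⊤ : ℕ∞) (L i)) (q : Pt n) :
    DifferentiableAt ℝ (lam L) q :=
  differentiableAt_fst.prodMk
    (differentiableAt_pi.2 fun i => differentiableAt_of_contDiff (hL i) q)

lemma pdv_comp_lam (hL : ∀ i, ContDiff ℝ (⊤ : ℕ∞) (L i)) {f : Pt n → ℝ} {q : Pt n}
    (hf : DifferentiableAt ℝ f (lam L q)) (j : Fin n) :
    pdv j (fun x => f (lam L x)) q = ∑ b, gdn L b j q * pdv b f (lam L q) := by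
  rw [pdv, fderiv_fun_comp q hf (differentiableAt_lam hL q), ContinuousLinearMap.comp_apply,
    fderiv_lam_apply hL]
  exact fderiv_apply_snd f _ _

lemma pdx_comp_lam (hL : ∀ i, ContDiff ℝ (⊤ : ℕ∞) (L i)) {f : Pt n → ℝ} {q : Pt n}
    (hf : DifferentiableAt ℝ f (lam L q)) (m : Fin n) :
    pdx m (fun x => f (lam L x)) q
      = pdx m f (lam L q) + ∑ b, pdx m (L b) q * pdv b f (lam L q) := by
  rw [pdx, fderiv_fun_comp q hf (differentiableAt_lam hL q), ContinuousLinearMap.comp_apply,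
    fderiv_lam_apply hL, fderiv_apply_eq_add, fderiv_apply_snd]
  rfl

lemma sum_ginv_mul_sum_gdn_mul
    (hginv : ∀ (q : Pt n) (s k : Fin n), ∑ r, ginv s r q * gdn L r k q = kron s k)
    (q : Pt n) (j : Fin n) (c : Fin n → ℝ) :
    ∑ s, ginv j s q * ∑ b, gdn L s b q * c b = c j := by
  simp_rw [Finset.mul_sum, ← mul_assoc]
  rw [Finset.sum_comm]
  simp_rw [← Finset.sum_mul, hginv]
  exact sum_kron_mul j c

lemma gdn_mul_ginv
    (hginv : ∀ (q : Pt n) (s k : Fin n), ∑ r, ginv s r q * gdn L r k q = kron s k)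
    (q : Pt n) (s k : Fin n) :
    ∑ r, gdn L s r q * ginv r k q = kron s k := by
  let A : Matrix (Fin n) (Fin n) ℝ := Matrix.of fun i j => ginv i j q
  let B : Matrix (Fin n) (Fin n) ℝ := Matrix.of fun i j => gdn L i j q
  have hAB : A * B = 1 := by
    ext i j
    simp [A, B, Matrix.mul_apply, hginv, kron, Matrix.one_apply]
  have hBA : (B * A) s k = (1 : Matrix (Fin n) (Fin n) ℝ) s k := by
    rw [mul_eq_one_comm.mp hAB]
  simpa [A, B, Matrix.mul_apply, kron, Matrix.one_apply] using hBA

lemma pdv_at_lam (hL : ∀ i, ContDiff ℝ (⊤ : ℕ∞) (L i))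
    (hginv : ∀ (q : Pt n) (s k : Fin n), ∑ r, ginv s r q * gdn L r k q = kron s k)
    {f E : Pt n → ℝ} {q : Pt n} (hf : DifferentiableAt ℝ f (lam L q))
    (hfE : (fun x => f (lam L x)) = E) (b : Fin n) :
    pdv b f (lam L q) = ∑ j, pdv j E q * ginv j b q := by
  simp_rw [← hfE, pdv_comp_lam hL hf, Finset.sum_mul]
  rw [Finset.sum_comm]
  simp_rw [mul_comm (gdn L _ _ q), mul_assoc, ← Finset.mul_sum, gdn_mul_ginv hginv]
  exact (sum_mul_kron b fun j => pdv j f (lam L q)).symm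

lemma pdx_at_lam (hL : ∀ i, ContDiff ℝ (⊤ : ℕ∞) (L i))
    (hginv : ∀ (q : Pt n) (s k : Fin n), ∑ r, ginv s r q * gdn L r k q = kron s k)
    {f E : Pt n → ℝ} {q : Pt n} (hf : DifferentiableAt ℝ f (lam L q))
    (hfE : (fun x => f (lam L x)) = E) (m : Fin n) :
    pdx m f (lam L q)
      = pdx m E q - ∑ j, ∑ b, pdv j E q * ginv j b q * pdx m (L b) q := by
  rw [← hfE, pdx_comp_lam hL hf, hfE, Finset.sum_comm]
  simp_rw [← Finset.sum_mul, ← pdv_at_lam hL hginv hf hfE, mul_comm]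
  ring

end Transport

section PRepresentation

variable {L V : Fam n} {ginv : Fin n → Fin n → Pt n → ℝ} {Γ : Conn n}

lemma contDiff_Gp (hΓ : ∀ k i j, ContDiff ℝ (⊤ : ℕ∞) (Γ k i j))
    (hV : ∀ i, ContDiff ℝ (⊤ : ℕ∞) (V i)) (k i j : Fin n) :
    ContDiff ℝ (⊤ : ℕ∞) (Gp Γ V k i j) := by
  unfold Gp lamInv
  fun_prop

lemma contDiff_Ucheck {Θ : Fam n} (hΘ : ∀ i, ContDiff ℝ (⊤ : ℕ∞) (Θ i))
    (hΓ : ∀ k i j, ContDiff ℝ (⊤ : ℕ∞) (Γ k i j))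
    (hV : ∀ i, ContDiff ℝ (⊤ : ℕ∞) (V i)) (k : Fin n) :
    ContDiff ℝ (⊤ : ℕ∞) (Ucheck Θ Γ V k) := by
  unfold Ucheck Qp pVec pS Gp lamInv
  fun_prop

lemma contDiff_Qp {Θ : Fam n} (hΘ : ∀ i, ContDiff ℝ (⊤ : ℕ∞) (Θ i))
    (hΓ : ∀ k i j, ContDiff ℝ (⊤ : ℕ∞) (Γ k i j))
    (hV : ∀ i, ContDiff ℝ (⊤ : ℕ∞) (V i)) (k : Fin n) :
    ContDiff ℝ (⊤ : ℕ∞) (Qp Θ Γ V k) := by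
  unfold Qp Gp lamInv
  fun_prop

lemma Gp_lam (hLeft : ∀ q : Pt n, lamInv V (lam L q) = q) (k i j : Fin n) (q : Pt n) :
    Gp Γ V k i j (lam L q) = Γ k i j q := by
  rw [Gp, hLeft]

lemma V_lam (hLeft : ∀ q : Pt n, lamInv V (lam L q) = q) (s : Fin n) (q : Pt n) :
    V s (lam L q) = q.2 s :=
  congrFun (congrArg Prod.snd (hLeft q)) s

lemma sum_ginv_mul_vS_L
    (hginv : ∀ (q : Pt n) (s k : Fin n), ∑ r, ginv s r q * gdn L r k q = kron s k)
    (q : Pt n) (j m : Fin n) :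
    ∑ s, ginv j s q * vS Γ m (L s) q
      = ∑ s, ginv j s q * pdx m (L s) q - ∑ a, q.2 a * Γ j a m q := by
  have h := sum_ginv_mul_sum_gdn_mul hginv q j fun b => ∑ a, q.2 a * Γ b a m q
  have hinner : ∀ s, ∑ a, ∑ b, q.2 a * Γ b a m q * pdv b (L s) q
      = ∑ b, gdn L s b q * ∑ a, q.2 a * Γ b a m q := fun s => by
    rw [Finset.sum_comm]
    simp_rw [Finset.mul_sum]
    exact Finset.sum_congr rfl fun b _ => Finset.sum_congr rfl fun a _ => by rw [gdn]; ring
  simp only [vS, mul_sub, Finset.sum_sub_distrib, hinner, h]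

lemma pS_at_lam (hL : ∀ i, ContDiff ℝ (⊤ : ℕ∞) (L i))
    (hginv : ∀ (q : Pt n) (s k : Fin n), ∑ r, ginv s r q * gdn L r k q = kron s k)
    (hLeft : ∀ q : Pt n, lamInv V (lam L q) = q)
    {f E : Pt n → ℝ} {q : Pt n} (hf : DifferentiableAt ℝ f (lam L q))
    (hfE : (fun x => f (lam L x)) = E) (m : Fin n) :
    pS (Gp Γ V) m f (lam L q)
      = vS Γ m E q - ∑ j, ∑ s, pdv j E q * ginv j s q * vCov Γ m L s q := by
  have hcorr : ∀ j, ∑ s, pdv j E q * ginv j s q * vCov Γ m L s q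
      = pdv j E q * (∑ s, ginv j s q * pdx m (L s) q - ∑ a, q.2 a * Γ j a m q
          - ∑ s, ∑ b, ginv j s q * Γ b m s q * L b q) := fun j => by
    rw [← sum_ginv_mul_vS_L hginv]
    simp only [vCov, mul_sub, Finset.mul_sum, Finset.sum_sub_distrib, mul_assoc]
  have e1 : ∑ j, pdv j E q * ∑ s, ginv j s q * pdx m (L s) q
      = ∑ j, ∑ b, pdv j E q * ginv j b q * pdx m (L b) q := by
    simp only [Finset.mul_sum, mul_assoc]
  have e2 : ∑ j, pdv j E q * ∑ a, q.2 a * Γ j a m q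
      = ∑ a, ∑ b, q.2 a * Γ b a m q * pdv b E q := by
    simp only [Finset.mul_sum]
    rw [Finset.sum_comm]
    exact Finset.sum_congr rfl fun a _ => Finset.sum_congr rfl fun b _ => by ring
  have e3 : ∑ j, pdv j E q * ∑ s, ∑ b, ginv j s q * Γ b m s q * L b q
      = ∑ a, ∑ b, L a q * Γ a m b q * ∑ j, pdv j E q * ginv j b q := by
    simp only [Finset.mul_sum]
    rw [sum_reverse]
    exact Finset.sum_congr rfl fun a _ => Finset.sum_congr rfl fun b _ =>
      Finset.sum_congr rfl fun j _ => by ring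
  rw [pS, pdx_at_lam hL hginv hf hfE, vS]
  simp only [lam_snd, Gp_lam hLeft, pdv_at_lam hL hginv hf hfE, hcorr, mul_sub,
    Finset.sum_sub_distrib]
  linarith

lemma pCov_at_lam (hL : ∀ i, ContDiff ℝ (⊤ : ℕ∞) (L i))
    (hginv : ∀ (q : Pt n) (s k : Fin n), ∑ r, ginv s r q * gdn L r k q = kron s k)
    (hLeft : ∀ q : Pt n, lamInv V (lam L q) = q)
    {X E : Fam n} {q : Pt n} (hXE : ∀ b, (fun x => X b (lam L x)) = E b) (k m : Fin n)
    (hX : DifferentiableAt ℝ (X k) (lam L q)) :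
    pCov (Gp Γ V) m X k (lam L q)
      = vCov Γ m E k q - ∑ j, ∑ s, pdv j (E k) q * ginv j s q * vCov Γ m L s q := by
  rw [pCov, pS_at_lam hL hginv hLeft hX (hXE k), vCov]
  simp only [Gp_lam hLeft, ← congrFun (hXE _) q]
  ring

lemma pdv_V_lam (hL : ∀ i, ContDiff ℝ (⊤ : ℕ∞) (L i))
    (hV : ∀ i, ContDiff ℝ (⊤ : ℕ∞) (V i))
    (hginv : ∀ (q : Pt n) (s k : Fin n), ∑ r, ginv s r q * gdn L r k q = kron s k)
    (hLeft : ∀ q : Pt n, lamInv V (lam L q) = q) (s b : Fin n) (q : Pt n) :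
    pdv b (V s) (lam L q) = ginv s b q := by
  rw [pdv_at_lam hL hginv (differentiableAt_of_contDiff (hV s) _) (funext (V_lam hLeft s))]
  simp only [pdv_snd, sum_kron_mul]

lemma Wp_lam (hL : ∀ i, ContDiff ℝ (⊤ : ℕ∞) (L i))
    (hV : ∀ i, ContDiff ℝ (⊤ : ℕ∞) (V i))
    (hginv : ∀ (q : Pt n) (s k : Fin n), ∑ r, ginv s r q * gdn L r k q = kron s k)
    (hLeft : ∀ q : Pt n, lamInv V (lam L q) = q) (i : Fin n) (q : Pt n) :
    Wp V i (lam L q) = Lup L ginv i q := by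
  simp only [Wp, Lup, lam_snd, pdv_V_lam hL hV hginv hLeft]

lemma vS_snd (i s : Fin n) (q : Pt n) :
    vS Γ i (fun x : Pt n => x.2 s) q = -∑ a, q.2 a * Γ s a i q := by
  simp only [vS, pdx_snd, pdv_snd, zero_sub, sum_mul_kron']

lemma pVec_V_lam (hL : ∀ i, ContDiff ℝ (⊤ : ℕ∞) (L i))
    (hV : ∀ i, ContDiff ℝ (⊤ : ℕ∞) (V i))
    (hginv : ∀ (q : Pt n) (s k : Fin n), ∑ r, ginv s r q * gdn L r k q = kron s k)
    (hLeft : ∀ q : Pt n, lamInv V (lam L q) = q)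
    (hΓsym : ∀ (k i j : Fin n) (q : Pt n), Γ k i j q = Γ k j i q) (i s : Fin n) (q : Pt n) :
    pVec (Gp Γ V) i V s (lam L q) = -∑ m, ginv s m q * vCov Γ i L m q := by
  rw [pVec, pS_at_lam hL hginv hLeft (differentiableAt_of_contDiff (hV s) _)
    (funext (V_lam hLeft s)), vS_snd]
  simp only [pdv_snd, Gp_lam hLeft, V_lam hLeft, mul_assoc, ← Finset.mul_sum, sum_kron_mul]
  simp only [hΓsym s i, mul_comm (Γ s _ _ q)]
  ring

lemma Qp_lam {Φ Θ : Fam n} (hLeft : ∀ q : Pt n, lamInv V (lam L q) = q)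
    (hΓsym : ∀ (k i j : Fin n) (q : Pt n), Γ k i j q = Γ k j i q)
    (hΘdef : ∀ (q : Pt n) (i : Fin n),
      Θ i (lam L q) = (∑ s, pdx s (L i) q * q.2 s) + (∑ s, pdv s (L i) q * Φ s q))
    (r : Fin n) (q : Pt n) :
    Qp Θ Γ V r (lam L q) = Qv L Γ Φ r q := by
  have e1 : ∑ m, ∑ a, ∑ b, q.2 m * (q.2 a * Γ b a m q * pdv b (L r) q)
      = ∑ j, pdv j (L r) q * ∑ a, ∑ b, Γ j a b q * q.2 a * q.2 b := by
    simp only [Finset.mul_sum]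
    rw [sum_reverse]
    exact Finset.sum_congr rfl fun j _ => Finset.sum_congr rfl fun a _ =>
      Finset.sum_congr rfl fun b _ => by ring
  have e2 : ∑ m, ∑ b, q.2 m * (Γ b m r q * L b q)
      = ∑ j, ∑ k, Gp Γ V k r j (lam L q) * V j (lam L q) * (lam L q).2 k := by
    simp only [Gp_lam hLeft, V_lam hLeft, lam_snd, hΓsym _ r]
    exact Finset.sum_congr rfl fun j _ => Finset.sum_congr rfl fun k _ => by ring
  rw [Qp, Qv, Fcov, hΘdef, ← e2]
  simp only [vCov, vS, Fvec, gdn, mul_sub, mul_add, Finset.sum_sub_distrib,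
    Finset.sum_add_distrib, Finset.mul_sum] at e1 ⊢
  simp only [mul_comm (q.2 _) (pdx _ _ q)] at *
  linarith

lemma Ucheck_lam {Φ Θ : Fam n} (hL : ∀ i, ContDiff ℝ (⊤ : ℕ∞) (L i))
    (hV : ∀ i, ContDiff ℝ (⊤ : ℕ∞) (V i))
    (hginv : ∀ (q : Pt n) (s k : Fin n), ∑ r, ginv s r q * gdn L r k q = kron s k)
    (hLeft : ∀ q : Pt n, lamInv V (lam L q) = q)
    (hΓsym : ∀ (k i j : Fin n) (q : Pt n), Γ k i j q = Γ k j i q)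
    (hΘdef : ∀ (q : Pt n) (i : Fin n),
      Θ i (lam L q) = (∑ s, pdx s (L i) q * q.2 s) + (∑ s, pdv s (L i) q * Φ s q))
    (k : Fin n) (q : Pt n) :
    Ucheck Θ Γ V k (lam L q) = Uv L ginv Γ Φ k q := by
  have h : ∑ s, pVec (Gp Γ V) k V s (lam L q) * (lam L q).2 s
      = -∑ j, Lup L ginv j q * vCov Γ k L j q := by
    simp only [pVec_V_lam hL hV hginv hLeft hΓsym, lam_snd, Lup, neg_mul,
      Finset.sum_neg_distrib, Finset.sum_mul]
    rw [Finset.sum_comm]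
    exact congrArg Neg.neg
      (Finset.sum_congr rfl fun j _ => Finset.sum_congr rfl fun s _ => by ring)
  rw [Ucheck, Qp_lam hLeft hΓsym hΘdef, h, Qv, Uv]
  ring

lemma Dp_lam (hL : ∀ i, ContDiff ℝ (⊤ : ℕ∞) (L i))
    (hV : ∀ i, ContDiff ℝ (⊤ : ℕ∞) (V i))
    (hΓ : ∀ k i j, ContDiff ℝ (⊤ : ℕ∞) (Γ k i j))
    (hginv : ∀ (q : Pt n) (s k : Fin n), ∑ r, ginv s r q * gdn L r k q = kron s k)
    (hLeft : ∀ q : Pt n, lamInv V (lam L q) = q) (k r i j : Fin n) (q : Pt n) :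
    Dp (Gp Γ V) k r i j (lam L q) = ∑ a, ginv a r q * Dv Γ k j i a q := by
  rw [Dp, pdv_at_lam hL hginv (differentiableAt_of_contDiff (contDiff_Gp hΓ hV k i j) _)
    (funext (Gp_lam hLeft k i j)), ← Finset.sum_neg_distrib]
  exact Finset.sum_congr rfl fun a _ => by rw [Dv]; ring

lemma Rp_lam (hL : ∀ i, ContDiff ℝ (⊤ : ℕ∞) (L i))
    (hV : ∀ i, ContDiff ℝ (⊤ : ℕ∞) (V i))
    (hΓ : ∀ k i j, ContDiff ℝ (⊤ : ℕ∞) (Γ k i j))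
    (hginv : ∀ (q : Pt n) (s k : Fin n), ∑ r, ginv s r q * gdn L r k q = kron s k)
    (hLeft : ∀ q : Pt n, lamInv V (lam L q) = q)
    (hΓsym : ∀ (k i j : Fin n) (q : Pt n), Γ k i j q = Γ k j i q)
    (k r i j : Fin n) (q : Pt n) :
    Rp (Gp Γ V) k r i j (lam L q)
      = Rv Γ k r i j q
        + ∑ a, ∑ s, ginv a s q * vCov Γ i L s q * Dv Γ k r j a q
        - ∑ a, ∑ s, ginv a s q * vCov Γ j L s q * Dv Γ k r i a q := by
  have hGsym : ∀ k i j q, Gp Γ V k i j q = Gp Γ V k j i q := fun k i j q => hΓsym k i j _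
  have hD : ∀ i j, ∑ a, ∑ s, ginv a s q * vCov Γ i L s q * Dv Γ k r j a q
      = -∑ a, ∑ s, pdv a (Γ k j r) q * ginv a s q * vCov Γ i L s q := fun i j => by
    simp only [Dv, ← Finset.sum_neg_distrib]
    exact Finset.sum_congr rfl fun a _ => Finset.sum_congr rfl fun s _ => by ring
  rw [Rp_eq_pS_sub_pS hGsym, Rv_eq_vS_sub_vS hΓsym, hD, hD,
    pS_at_lam hL hginv hLeft (differentiableAt_of_contDiff (contDiff_Gp hΓ hV k j r) _)
      (funext (Gp_lam hLeft k j r)),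
    pS_at_lam hL hginv hLeft (differentiableAt_of_contDiff (contDiff_Gp hΓ hV k i r) _)
      (funext (Gp_lam hLeft k i r))]
  simp only [Gp_lam hLeft]
  ring

end PRepresentation

section BetaTerms

variable {L V : Fam n} {ginv : Fin n → Fin n → Pt n → ℝ} {Γ : Conn n} {Φ Θ : Fam n}

lemma sum_pCov_Ucheck_mul_V_lam (hL : ∀ i, ContDiff ℝ (⊤ : ℕ∞) (L i))
    (hV : ∀ i, ContDiff ℝ (⊤ : ℕ∞) (V i))
    (hginv : ∀ (q : Pt n) (s k : Fin n), ∑ r, ginv s r q * gdn L r k q = kron s k)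
    (hLeft : ∀ q : Pt n, lamInv V (lam L q) = q)
    (hΓ : ∀ k i j, ContDiff ℝ (⊤ : ℕ∞) (Γ k i j))
    (hΓsym : ∀ (k i j : Fin n) (q : Pt n), Γ k i j q = Γ k j i q)
    (hΘ : ∀ i, ContDiff ℝ (⊤ : ℕ∞) (Θ i))
    (hΘdef : ∀ (q : Pt n) (i : Fin n),
      Θ i (lam L q) = (∑ s, pdx s (L i) q * q.2 s) + (∑ s, pdv s (L i) q * Φ s q))
    (k : Fin n) (q : Pt n) :
    ∑ r, pCov (Gp Γ V) r (Ucheck Θ Γ V) k (lam L q) * V r (lam L q)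
      = ∑ r, q.2 r * vCov Γ r (Uv L ginv Γ Φ) k q
        - ∑ j, pdv j (Uv L ginv Γ Φ k) q
            * ∑ s, ginv j s q * ∑ r, q.2 r * vCov Γ r L s q := by
  simp only [pCov_at_lam hL hginv hLeft
      (fun b => funext (Ucheck_lam hL hV hginv hLeft hΓsym hΘdef b)) k _
      (differentiableAt_of_contDiff (contDiff_Ucheck hΘ hΓ hV k) _),
    V_lam hLeft, sub_mul, Finset.sum_sub_distrib, Finset.sum_mul, Finset.mul_sum]
  rw [sum_rotate_left]
  congr 1
  · exact Finset.sum_congr rfl fun r _ => by ring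
  · exact Finset.sum_congr rfl fun j _ => Finset.sum_congr rfl fun s _ =>
      Finset.sum_congr rfl fun r _ => by ring

lemma sum_pdv_Ucheck_mul_Qp_lam (hL : ∀ i, ContDiff ℝ (⊤ : ℕ∞) (L i))
    (hV : ∀ i, ContDiff ℝ (⊤ : ℕ∞) (V i))
    (hginv : ∀ (q : Pt n) (s k : Fin n), ∑ r, ginv s r q * gdn L r k q = kron s k)
    (hLeft : ∀ q : Pt n, lamInv V (lam L q) = q)
    (hΓ : ∀ k i j, ContDiff ℝ (⊤ : ℕ∞) (Γ k i j))
    (hΓsym : ∀ (k i j : Fin n) (q : Pt n), Γ k i j q = Γ k j i q)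
    (hΘ : ∀ i, ContDiff ℝ (⊤ : ℕ∞) (Θ i))
    (hΘdef : ∀ (q : Pt n) (i : Fin n),
      Θ i (lam L q) = (∑ s, pdx s (L i) q * q.2 s) + (∑ s, pdv s (L i) q * Φ s q))
    (k : Fin n) (q : Pt n) :
    ∑ r, pdv r (Ucheck Θ Γ V k) (lam L q) * Qp Θ Γ V r (lam L q)
      = ∑ j, pdv j (Uv L ginv Γ Φ k) q * ∑ s, ginv j s q * ∑ r, q.2 r * vCov Γ r L s q
        + ∑ j, Fvec Γ Φ j q * pdv j (Uv L ginv Γ Φ k) q := by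
  have hF : ∀ j, ∑ s, ginv j s q * Fcov L Γ Φ s q = Fvec Γ Φ j q :=
    fun j => sum_ginv_mul_sum_gdn_mul hginv q j fun b => Fvec Γ Φ b q
  simp only [pdv_at_lam hL hginv (differentiableAt_of_contDiff (contDiff_Ucheck hΘ hΓ hV k) _)
      (funext (Ucheck_lam hL hV hginv hLeft hΓsym hΘdef k)),
    Qp_lam hLeft hΓsym hΘdef, Finset.sum_mul]
  rw [Finset.sum_comm]
  simp only [mul_assoc, ← Finset.mul_sum, Qv, mul_add, Finset.sum_add_distrib, hF,
    mul_comm (Fvec Γ Φ _ q)]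

lemma sum_pVec_V_mul_Ucheck_lam (hL : ∀ i, ContDiff ℝ (⊤ : ℕ∞) (L i))
    (hV : ∀ i, ContDiff ℝ (⊤ : ℕ∞) (V i))
    (hginv : ∀ (q : Pt n) (s k : Fin n), ∑ r, ginv s r q * gdn L r k q = kron s k)
    (hLeft : ∀ q : Pt n, lamInv V (lam L q) = q)
    (hΓsym : ∀ (k i j : Fin n) (q : Pt n), Γ k i j q = Γ k j i q)
    (hΘdef : ∀ (q : Pt n) (i : Fin n),
      Θ i (lam L q) = (∑ s, pdx s (L i) q * q.2 s) + (∑ s, pdv s (L i) q * Φ s q))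
    (k : Fin n) (q : Pt n) :
    ∑ r, pVec (Gp Γ V) k V r (lam L q) * Ucheck Θ Γ V r (lam L q)
      = -(∑ j, ∑ r, ∑ s, vCov Γ k L j q * ginv r j q * q.2 s * vCov Γ s L r q)
        - (∑ j, ∑ r, vCov Γ k L j q * ginv r j q * Fcov L Γ Φ r q)
        + (∑ r, ∑ m, ∑ a, ginv r m q * vCov Γ k L m q * Lup L ginv a q
            * vCov Γ r L a q) := by
  have e1 : ∑ r, ∑ s, ∑ j, ginv r j q * vCov Γ k L j q * (q.2 s * vCov Γ s L r q)
      = ∑ j, ∑ r, ∑ s, vCov Γ k L j q * ginv r j q * q.2 s * vCov Γ s L r q := by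
    rw [sum_rotate_right]
    exact Finset.sum_congr rfl fun j _ => Finset.sum_congr rfl fun r _ =>
      Finset.sum_congr rfl fun s _ => by ring
  have e2 : ∑ r, ∑ j, ginv r j q * vCov Γ k L j q * Fcov L Γ Φ r q
      = ∑ j, ∑ r, vCov Γ k L j q * ginv r j q * Fcov L Γ Φ r q := by
    rw [Finset.sum_comm]
    exact Finset.sum_congr rfl fun j _ => Finset.sum_congr rfl fun r _ => by ring
  have e3 : ∑ r, ∑ a, ∑ m, ginv r m q * vCov Γ k L m q * (Lup L ginv a q * vCov Γ r L a q)
      = ∑ r, ∑ m, ∑ a, ginv r m q * vCov Γ k L m q * Lup L ginv a q * vCov Γ r L a q := by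
    refine Finset.sum_congr rfl fun r _ => ?_
    rw [Finset.sum_comm]
    exact Finset.sum_congr rfl fun m _ => Finset.sum_congr rfl fun a _ => by ring
  simp only [pVec_V_lam hL hV hginv hLeft hΓsym, Ucheck_lam hL hV hginv hLeft hΓsym hΘdef, Uv,
    neg_mul, Finset.sum_neg_distrib, mul_add, mul_sub, Finset.sum_add_distrib,
    Finset.sum_sub_distrib, Finset.sum_mul, Finset.mul_sum] at e1 e3 ⊢
  linarith

lemma pCov_Qp_lam (hL : ∀ i, ContDiff ℝ (⊤ : ℕ∞) (L i))
    (hV : ∀ i, ContDiff ℝ (⊤ : ℕ∞) (V i))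
    (hginv : ∀ (q : Pt n) (s k : Fin n), ∑ r, ginv s r q * gdn L r k q = kron s k)
    (hLeft : ∀ q : Pt n, lamInv V (lam L q) = q)
    (hΓ : ∀ k i j, ContDiff ℝ (⊤ : ℕ∞) (Γ k i j))
    (hΓsym : ∀ (k i j : Fin n) (q : Pt n), Γ k i j q = Γ k j i q)
    (hΦ : ∀ i, ContDiff ℝ (⊤ : ℕ∞) (Φ i))
    (hΘ : ∀ i, ContDiff ℝ (⊤ : ℕ∞) (Θ i))
    (hΘdef : ∀ (q : Pt n) (i : Fin n),
      Θ i (lam L q) = (∑ s, pdx s (L i) q * q.2 s) + (∑ s, pdv s (L i) q * Φ s q))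
    (k r : Fin n) (q : Pt n) :
    pCov (Gp Γ V) k (Qp Θ Γ V) r (lam L q)
      = ∑ m, q.2 m * vCov2 Γ k (fun m' r' => vCov Γ m' L r') m r q
        + vCov Γ k (Fcov L Γ Φ) r q
        - ∑ j, ∑ s, pdv j (Qv L Γ Φ r) q * ginv j s q * vCov Γ k L s q := by
  rw [pCov_at_lam hL hginv hLeft (fun b => funext (Qp_lam hLeft hΓsym hΘdef b)) r k
    (differentiableAt_of_contDiff (contDiff_Qp hΘ hΓ hV r) _), vCov_Qv hL hΓ hΓsym hΦ]

lemma sum_pCov_Qp_mul_Wp_lam (hL : ∀ i, ContDiff ℝ (⊤ : ℕ∞) (L i))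
    (hV : ∀ i, ContDiff ℝ (⊤ : ℕ∞) (V i))
    (hginv : ∀ (q : Pt n) (s k : Fin n), ∑ r, ginv s r q * gdn L r k q = kron s k)
    (hLeft : ∀ q : Pt n, lamInv V (lam L q) = q)
    (hΓ : ∀ k i j, ContDiff ℝ (⊤ : ℕ∞) (Γ k i j))
    (hΓsym : ∀ (k i j : Fin n) (q : Pt n), Γ k i j q = Γ k j i q)
    (hΦ : ∀ i, ContDiff ℝ (⊤ : ℕ∞) (Φ i))
    (hΘ : ∀ i, ContDiff ℝ (⊤ : ℕ∞) (Θ i))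
    (hΘdef : ∀ (q : Pt n) (i : Fin n),
      Θ i (lam L q) = (∑ s, pdx s (L i) q * q.2 s) + (∑ s, pdv s (L i) q * Φ s q))
    (k : Fin n) (q : Pt n) :
    ∑ r, pCov (Gp Γ V) k (Qp Θ Γ V) r (lam L q) * Wp V r (lam L q)
      = (∑ r, Lup L ginv r q * vCov Γ k (Fcov L Γ Φ) r q)
        + (∑ m, ∑ r, Lup L ginv r q * q.2 m * vCov2 Γ k (fun m' r' => vCov Γ m' L r') m r q)
        - (∑ j, ∑ r, ∑ s, Lup L ginv r q * vCov Γ k L j q * ginv s j q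
            * pdv s (Fcov L Γ Φ r) q)
        - (∑ j, ∑ m, ∑ r, ∑ s, Lup L ginv r q * vCov Γ k L j q * ginv s j q * q.2 m
            * pdv s (vCov Γ m L r) q)
        - (∑ r, ∑ m, ∑ a, ginv r m q * vCov Γ k L m q * Lup L ginv a q
            * vCov Γ r L a q) := by
  have e1 : ∑ r, ∑ m, q.2 m * vCov2 Γ k (fun m' r' => vCov Γ m' L r') m r q * Lup L ginv r q
      = ∑ m, ∑ r, Lup L ginv r q * q.2 m * vCov2 Γ k (fun m' r' => vCov Γ m' L r') m r q := by
    rw [Finset.sum_comm]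
    exact Finset.sum_congr rfl fun m _ => Finset.sum_congr rfl fun r _ => by ring
  have e2 : ∑ r, ∑ j, ∑ s, vCov Γ j L r q * ginv j s q * vCov Γ k L s q * Lup L ginv r q
      = ∑ r, ∑ m, ∑ a, ginv r m q * vCov Γ k L m q * Lup L ginv a q * vCov Γ r L a q := by
    rw [sum_rotate_left]
    exact Finset.sum_congr rfl fun r _ => Finset.sum_congr rfl fun m _ =>
      Finset.sum_congr rfl fun a _ => by ring
  have e3 : ∑ r, ∑ j, ∑ s, pdv j (Fcov L Γ Φ r) q * ginv j s q * vCov Γ k L s q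
        * Lup L ginv r q
      = ∑ j, ∑ r, ∑ s, Lup L ginv r q * vCov Γ k L j q * ginv s j q
          * pdv s (Fcov L Γ Φ r) q := by
    rw [sum_rotate_right]
    exact Finset.sum_congr rfl fun s _ => Finset.sum_congr rfl fun r _ =>
      Finset.sum_congr rfl fun j _ => by ring
  have e4 : ∑ r, ∑ j, ∑ s, ∑ m, q.2 m * pdv j (vCov Γ m L r) q * ginv j s q
        * vCov Γ k L s q * Lup L ginv r q
      = ∑ j, ∑ m, ∑ r, ∑ s, Lup L ginv r q * vCov Γ k L j q * ginv s j q * q.2 m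
          * pdv s (vCov Γ m L r) q := by
    conv_lhs => enter [2, r]; rw [sum_rotate_left]
    rw [sum_rotate_left]
    exact Finset.sum_congr rfl fun s _ => Finset.sum_congr rfl fun m _ =>
      Finset.sum_congr rfl fun r _ => Finset.sum_congr rfl fun j _ => by ring
  simp only [pCov_Qp_lam hL hV hginv hLeft hΓ hΓsym hΦ hΘ hΘdef, Wp_lam hL hV hginv hLeft,
    pdv_Qv hL hΓ hΦ, sub_mul, add_mul, Finset.sum_add_distrib, Finset.sum_sub_distrib,
    Finset.sum_mul] at e1 e2 e3 e4 ⊢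
  simp only [mul_comm (vCov Γ k (Fcov L Γ Φ) _ q)]
  linarith

lemma Dv_comm (hΓsym : ∀ (k i j : Fin n) (q : Pt n), Γ k i j q = Γ k j i q)
    (k r i j : Fin n) (q : Pt n) : Dv Γ k r i j q = Dv Γ k i r j q := by
  simp only [Dv, show Γ k r i = Γ k i r from funext (hΓsym k r i)]

lemma sum_curvature_mul_Wp_lam (hL : ∀ i, ContDiff ℝ (⊤ : ℕ∞) (L i))
    (hV : ∀ i, ContDiff ℝ (⊤ : ℕ∞) (V i))
    (hginv : ∀ (q : Pt n) (s k : Fin n), ∑ r, ginv s r q * gdn L r k q = kron s k)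
    (hLeft : ∀ q : Pt n, lamInv V (lam L q) = q)
    (hΓ : ∀ k i j, ContDiff ℝ (⊤ : ℕ∞) (Γ k i j))
    (hΓsym : ∀ (k i j : Fin n) (q : Pt n), Γ k i j q = Γ k j i q)
    (hΘdef : ∀ (q : Pt n) (i : Fin n),
      Θ i (lam L q) = (∑ s, pdx s (L i) q * q.2 s) + (∑ s, pdv s (L i) q * Φ s q))
    (k : Fin n) (q : Pt n) :
    ∑ r, ∑ s, ∑ m, (Rp (Gp Γ V) s r m k (lam L q) * V m (lam L q)
        - Dp (Gp Γ V) s m r k (lam L q) * Qp Θ Γ V m (lam L q))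
        * Wp V r (lam L q) * (lam L q).2 s
      = (∑ r, ∑ s, ∑ m, Rv Γ s r m k q * q.2 m * Lup L ginv r q * L s q)
        - (∑ j, ∑ r, ∑ s, ∑ m, ∑ a, ginv a j q * vCov Γ k L j q * Dv Γ s m r a q
            * q.2 m * Lup L ginv r q * L s q)
        - (∑ r, ∑ s, ∑ m, ∑ a, ginv a m q * Dv Γ s r k a q * Fcov L Γ Φ m q
            * Lup L ginv r q * L s q) := by
  have hcancel : ∑ r, ∑ s, ∑ m, ∑ a, ∑ t, ginv a t q * vCov Γ m L t q * Dv Γ s r k a q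
        * q.2 m * Lup L ginv r q * L s q
      = ∑ r, ∑ s, ∑ m, ∑ j, ∑ a, ginv a m q * Dv Γ s k r a q * (q.2 j * vCov Γ j L m q)
        * Lup L ginv r q * L s q := by
    refine Finset.sum_congr rfl fun r _ => Finset.sum_congr rfl fun s _ => ?_
    rw [sum_rotate_right]
    exact Finset.sum_congr rfl fun m _ => Finset.sum_congr rfl fun j _ =>
      Finset.sum_congr rfl fun a _ => by rw [Dv_comm hΓsym s k]; ring
  have hD : ∑ r, ∑ s, ∑ m, ∑ a, ∑ t, ginv a t q * vCov Γ k L t q * Dv Γ s r m a q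
        * q.2 m * Lup L ginv r q * L s q
      = ∑ j, ∑ r, ∑ s, ∑ m, ∑ a, ginv a j q * vCov Γ k L j q * Dv Γ s m r a q
          * q.2 m * Lup L ginv r q * L s q := by
    conv_lhs => enter [2, r, 2, s, 2, m]; rw [Finset.sum_comm]
    conv_lhs => enter [2, r, 2, s]; rw [Finset.sum_comm]
    conv_lhs => enter [2, r]; rw [Finset.sum_comm]
    rw [Finset.sum_comm]
    exact Finset.sum_congr rfl fun j _ => Finset.sum_congr rfl fun r _ =>
      Finset.sum_congr rfl fun s _ => Finset.sum_congr rfl fun m _ =>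
      Finset.sum_congr rfl fun a _ => by rw [Dv_comm hΓsym s r m]
  have hF : ∑ r, ∑ s, ∑ m, ∑ a, ginv a m q * Dv Γ s k r a q * Fcov L Γ Φ m q
        * Lup L ginv r q * L s q
      = ∑ r, ∑ s, ∑ m, ∑ a, ginv a m q * Dv Γ s r k a q * Fcov L Γ Φ m q
          * Lup L ginv r q * L s q := by
    simp only [Dv_comm hΓsym _ k]
  simp only [Rp_lam hL hV hΓ hginv hLeft hΓsym, Dp_lam hL hV hΓ hginv hLeft,
    Qp_lam hLeft hΓsym hΘdef, Qv, V_lam hLeft, Wp_lam hL hV hginv hLeft, lam_snd,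
    sub_mul, add_mul, mul_add, Finset.sum_add_distrib, Finset.sum_sub_distrib,
    Finset.sum_mul, Finset.mul_sum]
  rw [hcancel, hD, hF]
  ring

end BetaTerms

end LegendreTransport

theorem stmt7_general
    (n : ℕ)
    (L V : Fam n) (ginv : Fin n → Fin n → Pt n → ℝ)
    (hL : ∀ i, ContDiff ℝ (⊤ : ℕ∞) (L i))
    (hV : ∀ i, ContDiff ℝ (⊤ : ℕ∞) (V i))
    (hLeft : ∀ q : Pt n, lamInv V (lam L q) = q)
    (hginv : ∀ (q : Pt n) (s k : Fin n), (∑ r, ginv s r q * gdn L r k q) = kron s k)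
    (Γ : Conn n)
    (hΓ : ∀ k i j, ContDiff ℝ (⊤ : ℕ∞) (Γ k i j))
    (hΓsym : ∀ (k i j : Fin n) (q : Pt n), Γ k i j q = Γ k j i q)
    (Φ : Fam n) (hΦ : ∀ i, ContDiff ℝ (⊤ : ℕ∞) (Φ i))
    (Θ : Fam n) (hΘ : ∀ i, ContDiff ℝ (⊤ : ℕ∞) (Θ i))
    (hΘdef : ∀ (q : Pt n) (i : Fin n),
      Θ i (lam L q) = (∑ s, pdx s (L i) q * q.2 s) + (∑ s, pdv s (L i) q * Φ s q)) :
    ∀ (q : Pt n) (k : Fin n),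
      betaCheck Θ Γ V k (lam L q) = betaV L ginv Γ Φ k q := by
  intro q k
  rw [betaCheck, betaV,
    LegendreTransport.sum_pCov_Ucheck_mul_V_lam hL hV hginv hLeft hΓ hΓsym hΘ hΘdef,
    LegendreTransport.sum_pdv_Ucheck_mul_Qp_lam hL hV hginv hLeft hΓ hΓsym hΘ hΘdef,
    LegendreTransport.sum_pVec_V_mul_Ucheck_lam hL hV hginv hLeft hΓsym hΘdef,
    LegendreTransport.sum_pCov_Qp_mul_Wp_lam hL hV hginv hLeft hΓ hΓsym hΦ hΘ hΘdef,
    LegendreTransport.sum_curvature_mul_Wp_lam hL hV hginv hLeft hΓ hΓsym hΘdef]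
  ring

theorem stmt7
    (n : ℕ) (hn : 2 ≤ n)
    (L V : Fam n) (ginv : Fin n → Fin n → Pt n → ℝ)
    (hL : ∀ i, ContDiff ℝ (⊤ : ℕ∞) (L i))
    (hV : ∀ i, ContDiff ℝ (⊤ : ℕ∞) (V i))
    (hginvSm : ∀ i j, ContDiff ℝ (⊤ : ℕ∞) (ginv i j))
    (hLeft : ∀ q : Pt n, lamInv V (lam L q) = q)
    (hRight : ∀ q : Pt n, lam L (lamInv V q) = q)
    (hginv : ∀ (q : Pt n) (s k : Fin n), (∑ r, ginv s r q * gdn L r k q) = kron s k)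
    (Γ : Conn n)
    (hΓ : ∀ k i j, ContDiff ℝ (⊤ : ℕ∞) (Γ k i j))
    (hΓsym : ∀ (k i j : Fin n) (q : Pt n), Γ k i j q = Γ k j i q)
    (Φ : Fam n) (hΦ : ∀ i, ContDiff ℝ (⊤ : ℕ∞) (Φ i))
    (Θ : Fam n) (hΘ : ∀ i, ContDiff ℝ (⊤ : ℕ∞) (Θ i))
    (hΘdef : ∀ (q : Pt n) (i : Fin n),
      Θ i (lam L q) = (∑ s, pdx s (L i) q * q.2 s) + (∑ s, pdv s (L i) q * Φ s q)) :
    ∀ (q : Pt n) (k : Fin n),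
      betaCheck Θ Γ V k (lam L q) = betaV L ginv Γ Φ k q :=
  stmt7_general n L V ginv hL hV hLeft hginv Γ hΓ hΓsym Φ hΦ Θ hΘ hΘdef
end

section
/- Under a gauge transformation the covector U transforms as U'_i = U_i + Σ_{q,r} L^q T^r_{iq} L_r at every point (x,v) and for all i. -/
theorem stmt11
    (n : ℕ) (hn : 2 ≤ n)
    (L V : Fam n) (ginv : Fin n → Fin n → Pt n → ℝ)
    (hL : ∀ i, ContDiff ℝ (⊤ : ℕ∞) (L i))
    (hV : ∀ i, ContDiff ℝ (⊤ : ℕ∞) (V i))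
    (hginvSm : ∀ i j, ContDiff ℝ (⊤ : ℕ∞) (ginv i j))
    (hLeft : ∀ q : Pt n, lamInv V (lam L q) = q)
    (hRight : ∀ q : Pt n, lam L (lamInv V q) = q)
    (hginv : ∀ (q : Pt n) (s k : Fin n), (∑ r, ginv s r q * gdn L r k q) = kron s k)
    (Γ : Conn n)
    (hΓ : ∀ k i j, ContDiff ℝ (⊤ : ℕ∞) (Γ k i j))
    (hΓsym : ∀ (k i j : Fin n) (q : Pt n), Γ k i j q = Γ k j i q)
    (Φ : Fam n) (hΦ : ∀ i, ContDiff ℝ (⊤ : ℕ∞) (Φ i))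
    (T : Conn n)
    (hT : ∀ k i j, ContDiff ℝ (⊤ : ℕ∞) (T k i j))
    (hTsym : ∀ (k i j : Fin n) (q : Pt n), T k i j q = T k j i q) :
    ∀ (q : Pt n) (i : Fin n),
      Uv L ginv (addT Γ T) Φ i q
        = Uv L ginv Γ Φ i q + ∑ j, ∑ r, Lup L ginv j q * T r i j q * L r q := by
  intro q i
  -- key contraction: Σ_j L^j g_{jb} = L_b
  have key : ∀ b, (∑ j, Lup L ginv j q * gdn L j b q) = L b q := by
    intro b
    simp only [Lup, Finset.sum_mul, mul_assoc]
    rw [Finset.sum_comm]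
    simp only [← Finset.mul_sum, hginv, kron, mul_ite, mul_one, mul_zero]
    simp
  have h1 : ∀ m j, vCov (addT Γ T) m L j q
      = vCov Γ m L j q - (∑ a, ∑ b, q.2 a * T b a m q * pdv b (L j) q)
        - ∑ b, T b m j q * L b q := by
    intro m j
    simp only [vCov, vS, addT, add_mul, mul_add, Finset.sum_add_distrib]
    ring
  have h2 : Fcov L (addT Γ T) Φ i q
      = Fcov L Γ Φ i q + ∑ j, ∑ k, ∑ l, gdn L i j q * T j k l q * q.2 k * q.2 l := by
    simp only [Fcov, Fvec, addT, add_mul, mul_add, Finset.sum_add_distrib,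
      Finset.mul_sum]
    ring_nf
  have hS2E : (∑ j, q.2 j * ∑ a, ∑ b, q.2 a * T b a j q * pdv b (L i) q)
      = ∑ j, ∑ k, ∑ l, gdn L i j q * T j k l q * q.2 k * q.2 l := by
    simp only [Finset.mul_sum, gdn]
    conv_lhs => rw [Finset.sum_comm]
    conv_rhs => rw [Finset.sum_comm]
    refine Finset.sum_congr rfl fun a _ => ?_
    conv_lhs => rw [Finset.sum_comm]
    refine Finset.sum_congr rfl fun b _ => Finset.sum_congr rfl fun j _ => ?_
    ring
  have hS5S3 : (∑ j, Lup L ginv j q * ∑ a, ∑ b, q.2 a * T b a i q * pdv b (L j) q)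
      = ∑ j, q.2 j * ∑ b, T b j i q * L b q := by
    simp only [Finset.mul_sum]
    conv_lhs => rw [Finset.sum_comm]
    refine Finset.sum_congr rfl fun a _ => ?_
    conv_lhs => rw [Finset.sum_comm]
    refine Finset.sum_congr rfl fun b _ => ?_
    have : (∑ j, Lup L ginv j q * (q.2 a * T b a i q * pdv b (L j) q))
        = (∑ j, Lup L ginv j q * gdn L j b q) * (q.2 a * T b a i q) := by
      rw [Finset.sum_mul]
      exact Finset.sum_congr rfl fun j _ => by simp only [gdn]; ring
    rw [this, key]
    ring
  have hS6 : (∑ j, Lup L ginv j q * ∑ b, T b i j q * L b q)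
      = ∑ j, ∑ r, Lup L ginv j q * T r i j q * L r q := by
    simp only [Finset.mul_sum]
    exact Finset.sum_congr rfl fun j _ => Finset.sum_congr rfl fun r _ => by ring
  simp only [Uv, h1, h2, mul_sub, Finset.sum_sub_distrib]
  rw [← hS6, ← hS2E, ← hS5S3]
  ring
end

section
/- Under a gauge transformation the curvature tensor transforms as R'^k_{rij} = R^k_{rij} + ∇_i T^k_{jr} − ∇_j T^k_{ir} − Σ_{s,m} v^m T^s_{jm} D^k_{irs} + Σ_{s,m} v^m T^s_{im} D^k_{jrs} + Σ_m (T^k_{im} T^m_{jr} − T^k_{jm} T^m_{ir}) + Σ_{s,m} v^m T^s_{jm} ∂T^k_{ir}/∂v^s − Σ_{s,m} v^m T^s_{im} ∂T^k_{jr}/∂v^s, where D^k_{irs} = −∂Γ^k_{ri}/∂v^s, D^k_{jrs} = −∂Γ^k_{rj}/∂v^s, and ∇ is the horizontal covariant derivative of the unprimed connection Γ. -/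
/-!
The curvature is a sum of terms linear in first derivatives of the connection and of terms
bilinear in two copies of it, so `R'` is `R` plus the same expression for `T` plus the mixed
products of `Γ` and `T`. By the symmetry of `Γ`, the `x`-derivatives of `T` together with the
mixed products in which `Γ` is not differentiated are exactly `∇_i T^k_{jr} − ∇_j T^k_{ir}`;
the mixed products in which `Γ` is differentiated along `v` are the dynamic-curvature terms.
-/

open Finset

section GaugeCurvature

variable {n : ℕ}

lemma addT_apply (Γ T : Conn n) (k i j : Fin n) : addT Γ T k i j = Γ k i j + T k i j := rfl

lemma pdx_add {f g : Pt n → ℝ} {q : Pt n} (hf : DifferentiableAt ℝ f q)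
    (hg : DifferentiableAt ℝ g q) (m : Fin n) :
    pdx m (f + g) q = pdx m f q + pdx m g q := by
  simp [pdx, fderiv_add hf hg]

lemma pdv_add {f g : Pt n → ℝ} {q : Pt n} (hf : DifferentiableAt ℝ f q)
    (hg : DifferentiableAt ℝ g q) (m : Fin n) :
    pdv m (f + g) q = pdv m f q + pdv m g q := by
  simp [pdv, fderiv_add hf hg]

lemma Rv_addT {Γ T : Conn n} {q : Pt n} (hΓ : ∀ k i j, DifferentiableAt ℝ (Γ k i j) q)
    (hT : ∀ k i j, DifferentiableAt ℝ (T k i j) q) (k r i j : Fin n) :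
    Rv (addT Γ T) k r i j q
      = Rv Γ k r i j q + Rv T k r i j q
        + (∑ m, (Γ k i m q * T m j r q + T k i m q * Γ m j r q
            - Γ k j m q * T m i r q - T k j m q * Γ m i r q))
        - (∑ m, ∑ s, (q.2 s * Γ m i s q * pdv m (T k j r) q
            + q.2 s * T m i s q * pdv m (Γ k j r) q))
        + (∑ m, ∑ s, (q.2 s * Γ m j s q * pdv m (T k i r) q
            + q.2 s * T m j s q * pdv m (Γ k i r) q)) := by
  simp only [Rv, addT_apply, Pi.add_apply, pdx_add (hΓ _ _ _) (hT _ _ _),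
    pdv_add (hΓ _ _ _) (hT _ _ _)]
  simp only [mul_add, add_mul, sum_add_distrib, sub_eq_add_neg, neg_add, ← sum_neg_distrib]
  ring

lemma vT12_sub_vT12 {Γ : Conn n} {q : Pt n} (hΓ : ∀ k i j, Γ k i j q = Γ k j i q)
    (T : Conn n) (k r i j : Fin n) :
    vT12 Γ i T k j r q - vT12 Γ j T k i r q
      = pdx i (T k j r) q - pdx j (T k i r) q
        + (∑ m, (Γ k i m q * T m j r q + T k i m q * Γ m j r q
            - Γ k j m q * T m i r q - T k j m q * Γ m i r q))
        - (∑ m, ∑ s, q.2 s * Γ m i s q * pdv m (T k j r) q)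
        + (∑ m, ∑ s, q.2 s * Γ m j s q * pdv m (T k i r) q) := by
  have hsum : ∀ (l : Fin n) (f : Fin n → ℝ),
      ∑ a, ∑ b, q.2 a * Γ b a l q * f b = ∑ m, ∑ s, q.2 s * Γ m l s q * f m := by
    intro l f
    rw [sum_comm]
    simp only [hΓ _ _ l]
  simp only [vT12, vS, hsum, hΓ _ j i, mul_comm (T _ _ _ q), sum_add_distrib, sum_sub_distrib]
  ring

end GaugeCurvature

theorem stmt12_general
    (n : ℕ)
    (Γ : Conn n)
    (hΓ : ∀ k i j, ContDiff ℝ (⊤ : ℕ∞) (Γ k i j))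
    (hΓsym : ∀ (k i j : Fin n) (q : Pt n), Γ k i j q = Γ k j i q)
    (T : Conn n)
    (hT : ∀ k i j, ContDiff ℝ (⊤ : ℕ∞) (T k i j)) :
    ∀ (q : Pt n) (k r i j : Fin n),
      Rv (addT Γ T) k r i j q
        = Rv Γ k r i j q
          + vT12 Γ i T k j r q - vT12 Γ j T k i r q
          - (∑ s, ∑ m, q.2 m * T s j m q * Dv Γ k i r s q)
          + (∑ s, ∑ m, q.2 m * T s i m q * Dv Γ k j r s q)
          + (∑ m, (T k i m q * T m j r q - T k j m q * T m i r q))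
          + (∑ s, ∑ m, q.2 m * T s j m q * pdv s (T k i r) q)
          - (∑ s, ∑ m, q.2 m * T s i m q * pdv s (T k j r) q) := by
  intro q k r i j
  have hdiff : ∀ {F : Conn n}, (∀ k i j, ContDiff ℝ (⊤ : ℕ∞) (F k i j)) →
      ∀ k i j, DifferentiableAt ℝ (F k i j) q :=
    fun hF k i j => (hF k i j).differentiable (by simp) q
  have hΓri : Γ k r i = Γ k i r := funext (hΓsym k r i)
  have hΓrj : Γ k r j = Γ k j r := funext (hΓsym k r j)
  rw [Rv_addT (hdiff hΓ) (hdiff hT)]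
  simp only [Rv, Dv, hΓri, hΓrj, mul_neg, sum_neg_distrib, sum_add_distrib]
  linear_combination (vT12_sub_vT12 (hΓsym · · · q) T k r i j).symm

theorem stmt12
    (n : ℕ) (hn : 2 ≤ n)
    (L V : Fam n) (ginv : Fin n → Fin n → Pt n → ℝ)
    (hL : ∀ i, ContDiff ℝ (⊤ : ℕ∞) (L i))
    (hV : ∀ i, ContDiff ℝ (⊤ : ℕ∞) (V i))
    (hginvSm : ∀ i j, ContDiff ℝ (⊤ : ℕ∞) (ginv i j))
    (hLeft : ∀ q : Pt n, lamInv V (lam L q) = q)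
    (hRight : ∀ q : Pt n, lam L (lamInv V q) = q)
    (hginv : ∀ (q : Pt n) (s k : Fin n), (∑ r, ginv s r q * gdn L r k q) = kron s k)
    (Γ : Conn n)
    (hΓ : ∀ k i j, ContDiff ℝ (⊤ : ℕ∞) (Γ k i j))
    (hΓsym : ∀ (k i j : Fin n) (q : Pt n), Γ k i j q = Γ k j i q)
    (T : Conn n)
    (hT : ∀ k i j, ContDiff ℝ (⊤ : ℕ∞) (T k i j))
    (hTsym : ∀ (k i j : Fin n) (q : Pt n), T k i j q = T k j i q) :
    ∀ (q : Pt n) (k r i j : Fin n),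
      Rv (addT Γ T) k r i j q
        = Rv Γ k r i j q
          + vT12 Γ i T k j r q - vT12 Γ j T k i r q
          - (∑ s, ∑ m, q.2 m * T s j m q * Dv Γ k i r s q)
          + (∑ s, ∑ m, q.2 m * T s i m q * Dv Γ k j r s q)
          + (∑ m, (T k i m q * T m j r q - T k j m q * T m i r q))
          + (∑ s, ∑ m, q.2 m * T s j m q * pdv s (T k i r) q)
          - (∑ s, ∑ m, q.2 m * T s i m q * pdv s (T k j r) q) :=
  stmt12_general n Γ hΓ hΓsym T hT
end

section
/- The vector field α is gauge invariant: for every gauge transformation T and every point (x,v), α'^k(x,v) = α^k(x,v) for all k. -/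
/-!
Write `Z_r = v^s ∇_s L_r + F_r` and `Y^k = v^s ∇_s L^k + F^j ∂L^k/∂v^j` for the covariant
derivatives of `L` along the Newtonian system. Since
`∂_j (v^s ∇_s L_r) = ∇_j L_r + v^s ∂_j ∇_s L_r`,
`α^k = g^{rk} U_r + Y^k + L^r g^{jk} ∂_j Z_r - g^{mk} L_s D^s_{rjm} L^r v^j`.
The quadratic part `Γ v v` of the force absorbs the horizontal part of `∇`:
`v^s ∇_s f + F^j ∂f/∂v^j = v^s ∂f/∂x^s + Φ^j ∂f/∂v^j`. Hence under `Γ ↦ Γ + T` only tensorial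
terms move: `Z_r` by `-v^s T^b_{sr} L_b`, `Y^k` by `v^s T^k_{sa} L^a`, `U_r` by `L^j T^b_{rj} L_b`
(using `L^j g_{jb} = L_b`) and `D^s_{rjm}` by `-∂T^s_{jr}/∂v^m`. Differentiating the shift of `Z`
and contracting with `L^r g^{jk}` gives exactly the sum of the other three changes (the `Y` one
through `g_{bj} g^{jk} = δ_b^k`), so the changes cancel.
-/

open Finset

variable {n : ℕ}

section Calculus

@[fun_prop]
lemma ContDiff.pdv {f : Pt n → ℝ} (hf : ContDiff ℝ (⊤ : ℕ∞) f) (m : Fin n) :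
    ContDiff ℝ (⊤ : ℕ∞) (pdv m f) :=
  (hf.fderiv_right le_rfl).clm_apply contDiff_const

@[fun_prop]
lemma ContDiff.pdx {f : Pt n → ℝ} (hf : ContDiff ℝ (⊤ : ℕ∞) f) (m : Fin n) :
    ContDiff ℝ (⊤ : ℕ∞) (pdx m f) :=
  (hf.fderiv_right le_rfl).clm_apply contDiff_const

lemma ContDiff.differentiableAt_of_top {E F : Type*} [NormedAddCommGroup E] [NormedSpace ℝ E]
    [NormedAddCommGroup F] [NormedSpace ℝ F] {f : E → F} (hf : ContDiff ℝ (⊤ : ℕ∞) f) (x : E) :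
    DifferentiableAt ℝ f x :=
  hf.differentiable (by simp) x

variable {f g : Pt n → ℝ} {q : Pt n}

lemma pdv_fun_add (hf : DifferentiableAt ℝ f q) (hg : DifferentiableAt ℝ g q) (m : Fin n) :
    pdv m (fun q => f q + g q) q = pdv m f q + pdv m g q := by
  simp only [pdv, fderiv_fun_add hf hg, add_apply]

lemma pdv_fun_sub (hf : DifferentiableAt ℝ f q) (hg : DifferentiableAt ℝ g q) (m : Fin n) :
    pdv m (fun q => f q - g q) q = pdv m f q - pdv m g q := by
  simp only [pdv, fderiv_fun_sub hf hg, sub_apply]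

lemma pdv_fun_mul (hf : DifferentiableAt ℝ f q) (hg : DifferentiableAt ℝ g q) (m : Fin n) :
    pdv m (fun q => f q * g q) q = pdv m f q * g q + f q * pdv m g q := by
  simp only [pdv, fderiv_fun_mul hf hg, add_apply, smul_apply, smul_eq_mul]
  ring

lemma pdv_fun_sum {ι : Type*} (s : Finset ι) {f : ι → Pt n → ℝ}
    (hf : ∀ i ∈ s, DifferentiableAt ℝ (f i) q) (m : Fin n) :
    pdv m (fun q => ∑ i ∈ s, f i q) q = ∑ i ∈ s, pdv m (f i) q := by
  simp only [pdv, fderiv_fun_sum hf, _root_.sum_apply]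

lemma pdv_snd (m a : Fin n) : pdv m (fun q : Pt n => q.2 a) q = kron a m := by
  have : (fun q : Pt n => q.2 a) =
      ContinuousLinearMap.proj a ∘L ContinuousLinearMap.snd ℝ (Fin n → ℝ) (Fin n → ℝ) := rfl
  rw [pdv, this, ContinuousLinearMap.fderiv]
  simp [kron, Pi.single_apply]

lemma sum_kron_mul (f : Fin n → ℝ) (j : Fin n) : ∑ s, kron s j * f s = f j := by
  simp [kron]

lemma sum_mul_kron (f : Fin n → ℝ) (j : Fin n) : ∑ s, f s * kron s j = f j := by
  simp [kron]

end Calculus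

section Flow

variable {Φ X : Fam n} {q : Pt n}

lemma sum_mul_vS_add_sum_Fvec_mul_pdv (Γ : Conn n) (f : Pt n → ℝ) :
    ∑ s, q.2 s * vS Γ s f q + ∑ j, Fvec Γ Φ j q * pdv j f q
      = ∑ s, q.2 s * pdx s f q + ∑ j, Φ j q * pdv j f q := by
  have hcancel : ∑ s, q.2 s * ∑ a, ∑ b, q.2 a * Γ b a s q * pdv b f q
      = ∑ j, (∑ a, ∑ b, Γ j a b q * q.2 a * q.2 b) * pdv j f q := by
    simp only [mul_sum, sum_mul]
    rw [← sum_comm_cycle, sum_comm]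
    refine sum_congr rfl fun b _ => sum_congr rfl fun a _ => sum_congr rfl fun s _ => ?_
    ring
  simp only [vS, Fvec, mul_sub, add_mul, sum_sub_distrib, sum_add_distrib, hcancel]
  ring

noncomputable def flowCov (Γ : Conn n) (Φ X : Fam n) (r : Fin n) (q : Pt n) : ℝ :=
  ∑ s, q.2 s * vCov Γ s X r q + ∑ j, Fvec Γ Φ j q * pdv j (X r) q

noncomputable def flowVec (Γ : Conn n) (Φ X : Fam n) (k : Fin n) (q : Pt n) : ℝ :=
  ∑ s, q.2 s * vVec Γ s X k q + ∑ j, Fvec Γ Φ j q * pdv j (X k) q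

lemma flowCov_eq (Γ : Conn n) (r : Fin n) :
    flowCov Γ Φ X r q = ∑ s, q.2 s * pdx s (X r) q + ∑ j, Φ j q * pdv j (X r) q
      - ∑ s, ∑ b, q.2 s * Γ b s r q * X b q := by
  rw [← sum_mul_vS_add_sum_Fvec_mul_pdv Γ]
  simp only [flowCov, vCov, mul_sub, sum_sub_distrib, mul_sum, mul_assoc]
  ring

lemma flowVec_eq (Γ : Conn n) (k : Fin n) :
    flowVec Γ Φ X k q = ∑ s, q.2 s * pdx s (X k) q + ∑ j, Φ j q * pdv j (X k) q
      + ∑ s, ∑ a, q.2 s * Γ k s a q * X a q := by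
  rw [← sum_mul_vS_add_sum_Fvec_mul_pdv Γ]
  simp only [flowVec, vVec, mul_add, sum_add_distrib, mul_sum, mul_assoc]
  ring

end Flow

section Gauge

variable {Γ T : Conn n} {Φ X : Fam n} {q : Pt n}

lemma vS_addT (m : Fin n) (f : Pt n → ℝ) :
    vS (addT Γ T) m f q = vS Γ m f q - ∑ a, ∑ b, q.2 a * T b a m q * pdv b f q := by
  simp only [vS, addT, mul_add, add_mul, sum_add_distrib]
  ring

lemma vCov_addT (m j : Fin n) :
    vCov (addT Γ T) m X j q = vCov Γ m X j q
      - ∑ a, ∑ b, q.2 a * T b a m q * pdv b (X j) q - ∑ b, T b m j q * X b q := by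
  simp only [vCov, vS_addT, addT, add_mul, sum_add_distrib]
  ring

lemma Dv_addT {s i r : Fin n} (hΓ : DifferentiableAt ℝ (Γ s i r) q)
    (hT : DifferentiableAt ℝ (T s i r) q) (j : Fin n) :
    Dv (addT Γ T) s r i j q = Dv Γ s r i j q - pdv j (T s i r) q := by
  change -pdv j (fun q => Γ s i r q + T s i r q) q = _
  rw [pdv_fun_add hΓ hT, Dv]
  ring

noncomputable def gaugeShift (T : Conn n) (X : Fam n) (r : Fin n) (q : Pt n) : ℝ :=
  ∑ s, ∑ b, q.2 s * T b s r q * X b q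

lemma flowCov_addT (r : Fin n) :
    flowCov (addT Γ T) Φ X r q = flowCov Γ Φ X r q - gaugeShift T X r q := by
  simp only [flowCov_eq, gaugeShift, addT, mul_add, add_mul, sum_add_distrib]
  ring

lemma flowVec_addT (k : Fin n) :
    flowVec (addT Γ T) Φ X k q = flowVec Γ Φ X k q + ∑ s, ∑ a, q.2 s * T k s a q * X a q := by
  simp only [flowVec_eq, addT, mul_add, add_mul, sum_add_distrib]
  ring

end Gauge

section Legendre

variable {L : Fam n} {ginv : Fin n → Fin n → Pt n → ℝ} {Γ T : Conn n} {Φ : Fam n} {q : Pt n}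

lemma gdn_mul_ginv (hginv : ∀ s k, ∑ r, ginv s r q * gdn L r k q = kron s k) (b k : Fin n) :
    ∑ j, gdn L b j q * ginv j k q = kron b k := by
  have hleft : (Matrix.of fun s r => ginv s r q) * (Matrix.of fun r k => gdn L r k q) = 1 := by
    ext s k
    simpa [Matrix.mul_apply, Matrix.one_apply, kron] using hginv s k
  have hright : (Matrix.of fun r k => gdn L r k q) * (Matrix.of fun s r => ginv s r q) = 1 :=
    mul_eq_one_comm.mp hleft
  simpa [Matrix.mul_apply, Matrix.one_apply, kron] using congrArg (· b k) hright

lemma sum_Lup_mul_gdn (hginv : ∀ s k, ∑ r, ginv s r q * gdn L r k q = kron s k) (b : Fin n) :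
    ∑ j, Lup L ginv j q * gdn L j b q = L b q := by
  simp only [Lup, sum_mul]
  rw [sum_comm]
  simp only [mul_assoc, ← mul_sum, hginv, sum_mul_kron]

lemma Uv_eq_flowCov_sub (i : Fin n) :
    Uv L ginv Γ Φ i q = flowCov Γ Φ L i q - ∑ j, Lup L ginv j q * vCov Γ i L j q := by
  simp only [Uv, flowCov, Fcov, gdn, mul_comm (pdv _ _ q)]
  ring

lemma Uv_addT (hginv : ∀ s k, ∑ r, ginv s r q * gdn L r k q = kron s k) (i : Fin n) :
    Uv L ginv (addT Γ T) Φ i q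
      = Uv L ginv Γ Φ i q + ∑ j, ∑ b, Lup L ginv j q * T b i j q * L b q := by
  have hcontract : ∑ j, Lup L ginv j q * ∑ a, ∑ b, q.2 a * T b a i q * pdv b (L j) q
      = ∑ a, ∑ b, q.2 a * T b a i q * L b q := by
    simp only [mul_sum, ← sum_Lup_mul_gdn hginv, gdn]
    rw [← sum_comm_cycle]
    refine sum_congr rfl fun a _ => sum_congr rfl fun b _ => sum_congr rfl fun j _ => ?_
    ring
  simp only [Uv_eq_flowCov_sub, flowCov_addT, gaugeShift, vCov_addT, mul_sub, sum_sub_distrib,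
    hcontract]
  simp only [mul_sum, mul_assoc]
  ring

lemma sum_Lup_mul_ginv_mul_sum_T_mul_pdv
    (hginv : ∀ s k, ∑ r, ginv s r q * gdn L r k q = kron s k) (k : Fin n) :
    ∑ j, ∑ r, Lup L ginv r q * ginv j k q * ∑ s, ∑ b, q.2 s * (T b s r q * pdv j (L b) q)
      = ∑ s, ∑ a, q.2 s * T k s a q * Lup L ginv a q := by
  have hkron : ∀ r s b,
      ∑ j, Lup L ginv r q * ginv j k q * (q.2 s * (T b s r q * pdv j (L b) q))
        = Lup L ginv r q * q.2 s * T b s r q * kron b k := fun r s b => by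
    rw [← gdn_mul_ginv hginv, mul_sum]
    refine sum_congr rfl fun j _ => ?_
    rw [gdn]
    ring
  have hr : ∀ r, ∑ j, ∑ s, ∑ b, Lup L ginv r q * ginv j k q
        * (q.2 s * (T b s r q * pdv j (L b) q))
      = ∑ s, q.2 s * T k s r q * Lup L ginv r q := fun r => by
    rw [← sum_comm_cycle]
    simp only [hkron, sum_mul_kron]
    exact sum_congr rfl fun s _ => by ring
  simp only [mul_sum]
  rw [sum_comm, sum_congr rfl fun r _ => hr r, sum_comm]

end Legendre

section Derivatives

variable {L : Fam n} {ginv : Fin n → Fin n → Pt n → ℝ} {Γ T : Conn n} {Φ X : Fam n} {q : Pt n}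

lemma pdv_flowCov {r : Fin n} (hcov : ∀ s, DifferentiableAt ℝ (vCov Γ s X r) q)
    (hforce : DifferentiableAt ℝ (fun q => ∑ i, Fvec Γ Φ i q * pdv i (X r) q) q) (j : Fin n) :
    pdv j (flowCov Γ Φ X r) q = vCov Γ j X r q + ∑ s, q.2 s * pdv j (vCov Γ s X r) q
      + pdv j (fun q => ∑ i, Fvec Γ Φ i q * pdv i (X r) q) q := by
  have hsnd : ∀ s, DifferentiableAt ℝ (fun q : Pt n => q.2 s) q := by fun_prop
  change pdv j (fun q => ∑ s, q.2 s * vCov Γ s X r q + ∑ i, Fvec Γ Φ i q * pdv i (X r) q) q = _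
  rw [pdv_fun_add (by fun_prop) hforce, pdv_fun_sum _ fun s _ => (hsnd s).fun_mul (hcov s)]
  simp only [pdv_fun_mul (hsnd _) (hcov _), pdv_snd, sum_add_distrib, sum_kron_mul]

lemma pdv_gaugeShift {r : Fin n} (hT : ∀ b s, DifferentiableAt ℝ (T b s r) q)
    (hX : ∀ b, DifferentiableAt ℝ (X b) q) (j : Fin n) :
    pdv j (gaugeShift T X r) q = ∑ b, T b j r q * X b q
      + ∑ s, ∑ b, q.2 s * (pdv j (T b s r) q * X b q + T b s r q * pdv j (X b) q) := by
  have hsnd : ∀ s, DifferentiableAt ℝ (fun q : Pt n => q.2 s) q := by fun_prop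
  have hterm : ∀ s b, pdv j (fun q => q.2 s * T b s r q * X b q) q
      = kron s j * (T b s r q * X b q)
        + q.2 s * (pdv j (T b s r) q * X b q + T b s r q * pdv j (X b) q) := fun s b => by
    rw [pdv_fun_mul ((hsnd s).fun_mul (hT b s)) (hX b), pdv_fun_mul (hsnd s) (hT b s), pdv_snd]
    ring
  have hsum : ∀ s, pdv j (fun q => ∑ b, q.2 s * T b s r q * X b q) q
      = ∑ b, pdv j (fun q => q.2 s * T b s r q * X b q) q := fun s =>
    pdv_fun_sum _ (fun b _ => by fun_prop) j
  change pdv j (fun q => ∑ s, ∑ b, q.2 s * T b s r q * X b q) q = _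
  rw [pdv_fun_sum _ (fun s _ => by fun_prop)]
  simp only [hsum, hterm, sum_add_distrib, ← mul_sum, sum_kron_mul]

lemma alphaV_eq (hL : ∀ i, ContDiff ℝ (⊤ : ℕ∞) (L i))
    (hΓ : ∀ k i j, ContDiff ℝ (⊤ : ℕ∞) (Γ k i j)) (hΦ : ∀ i, ContDiff ℝ (⊤ : ℕ∞) (Φ i))
    (k : Fin n) :
    alphaV L ginv Γ Φ k q = ∑ r, ginv r k q * Uv L ginv Γ Φ r q + flowVec Γ Φ (Lup L ginv) k q
      + ∑ j, ∑ r, Lup L ginv r q * ginv j k q * pdv j (flowCov Γ Φ L r) q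
      - ∑ j, ∑ m, ∑ r, ∑ s, ginv m k q * L s q * Dv Γ s r j m q * Lup L ginv r q * q.2 j := by
  have hforce : ∀ r, (fun q => ∑ i, Fvec Γ Φ i q * pdv i (L r) q) = Fcov L Γ Φ r := fun r =>
    funext fun q => by simp only [Fcov, gdn, mul_comm]
  have hcov (s r : Fin n) : ContDiff ℝ (⊤ : ℕ∞) (vCov Γ s L r) := by unfold vCov vS; fun_prop
  have hFcov (r : Fin n) : ContDiff ℝ (⊤ : ℕ∞) (Fcov L Γ Φ r) := by unfold Fcov gdn Fvec; fun_prop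
  have hpdv : ∀ j r, pdv j (flowCov Γ Φ L r) q = vCov Γ j L r q
      + ∑ s, q.2 s * pdv j (vCov Γ s L r) q + pdv j (Fcov L Γ Φ r) q := fun j r => by
    rw [pdv_flowCov (fun s => (hcov s r).differentiableAt_of_top q)
      (by rw [hforce]; exact (hFcov r).differentiableAt_of_top q), hforce]
  simp only [alphaV, flowVec, hpdv, mul_add, sum_add_distrib, mul_sum, mul_assoc]
  ring

lemma pdv_flowCov_addT (hL : ∀ i, ContDiff ℝ (⊤ : ℕ∞) (L i))
    (hΓ : ∀ k i j, ContDiff ℝ (⊤ : ℕ∞) (Γ k i j)) (hΦ : ∀ i, ContDiff ℝ (⊤ : ℕ∞) (Φ i))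
    (hT : ∀ k i j, ContDiff ℝ (⊤ : ℕ∞) (T k i j)) (j r : Fin n) :
    pdv j (flowCov (addT Γ T) Φ L r) q
      = pdv j (flowCov Γ Φ L r) q - pdv j (gaugeShift T L r) q := by
  rw [show flowCov (addT Γ T) Φ L r = fun q => flowCov Γ Φ L r q - gaugeShift T L r q from
    funext fun _ => flowCov_addT r]
  have hflow : ContDiff ℝ (⊤ : ℕ∞) (flowCov Γ Φ L r) := by unfold flowCov vCov vS Fvec; fun_prop
  have hshift : ContDiff ℝ (⊤ : ℕ∞) (gaugeShift T L r) := by unfold gaugeShift; fun_prop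
  exact pdv_fun_sub (hflow.differentiableAt_of_top q) (hshift.differentiableAt_of_top q) j

lemma sum_Lup_mul_ginv_mul_pdv_gaugeShift
    (hginv : ∀ s k, ∑ r, ginv s r q * gdn L r k q = kron s k)
    (hT : ∀ b s r, DifferentiableAt ℝ (T b s r) q) (hL : ∀ b, DifferentiableAt ℝ (L b) q)
    (k : Fin n) :
    ∑ j, ∑ r, Lup L ginv r q * ginv j k q * pdv j (gaugeShift T L r) q
      = ∑ r, ginv r k q * ∑ j, ∑ b, Lup L ginv j q * T b r j q * L b q
        + ∑ s, ∑ a, q.2 s * T k s a q * Lup L ginv a q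
        + ∑ j, ∑ m, ∑ r, ∑ s, ginv m k q * L s q * pdv m (T s j r) q * Lup L ginv r q * q.2 j := by
  have hU : ∑ j, ∑ r, Lup L ginv r q * ginv j k q * ∑ b, T b j r q * L b q
      = ∑ r, ginv r k q * ∑ j, ∑ b, Lup L ginv j q * T b r j q * L b q := by
    simp only [mul_sum]
    refine sum_congr rfl fun j _ => sum_congr rfl fun r _ => sum_congr rfl fun b _ => ?_
    ring
  have hD : ∑ j, ∑ r, Lup L ginv r q * ginv j k q
        * ∑ s, ∑ b, q.2 s * (pdv j (T b s r) q * L b q)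
      = ∑ j, ∑ m, ∑ r, ∑ s, ginv m k q * L s q * pdv m (T s j r) q * Lup L ginv r q * q.2 j := by
    simp only [mul_sum]
    rw [sum_comm_cycle]
    refine sum_congr rfl fun s _ => sum_congr rfl fun j _ => sum_congr rfl fun r _ =>
      sum_congr rfl fun b _ => ?_
    ring
  simp only [pdv_gaugeShift (hT · · _) hL, mul_add, sum_add_distrib, hU,
    sum_Lup_mul_ginv_mul_sum_T_mul_pdv hginv, hD]
  ring

end Derivatives

theorem stmt15_general
    (n : ℕ)
    (L : Fam n) (ginv : Fin n → Fin n → Pt n → ℝ)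
    (hL : ∀ i, ContDiff ℝ (⊤ : ℕ∞) (L i))
    (hginv : ∀ (q : Pt n) (s k : Fin n), (∑ r, ginv s r q * gdn L r k q) = kron s k)
    (Γ : Conn n)
    (hΓ : ∀ k i j, ContDiff ℝ (⊤ : ℕ∞) (Γ k i j))
    (Φ : Fam n) (hΦ : ∀ i, ContDiff ℝ (⊤ : ℕ∞) (Φ i))
    (T : Conn n)
    (hT : ∀ k i j, ContDiff ℝ (⊤ : ℕ∞) (T k i j)) :
    ∀ (q : Pt n) (k : Fin n),
      alphaV L ginv (addT Γ T) Φ k q = alphaV L ginv Γ Φ k q := by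
  intro q k
  have hΓT : ∀ k i j, ContDiff ℝ (⊤ : ℕ∞) (addT Γ T k i j) := fun k i j =>
    (hΓ k i j).add (hT k i j)
  rw [alphaV_eq hL hΓT hΦ, alphaV_eq hL hΓ hΦ]
  simp only [Uv_addT (hginv q), flowVec_addT, pdv_flowCov_addT hL hΓ hΦ hT,
    Dv_addT ((hΓ _ _ _).differentiableAt_of_top q) ((hT _ _ _).differentiableAt_of_top q),
    mul_add, mul_sub, sub_mul, sum_add_distrib, sum_sub_distrib,
    sum_Lup_mul_ginv_mul_pdv_gaugeShift (hginv q)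
      (fun _ _ _ => (hT _ _ _).differentiableAt_of_top q)
      (fun _ => (hL _).differentiableAt_of_top q)]
  ring

theorem stmt15
    (n : ℕ) (hn : 2 ≤ n)
    (L V : Fam n) (ginv : Fin n → Fin n → Pt n → ℝ)
    (hL : ∀ i, ContDiff ℝ (⊤ : ℕ∞) (L i))
    (hV : ∀ i, ContDiff ℝ (⊤ : ℕ∞) (V i))
    (hginvSm : ∀ i j, ContDiff ℝ (⊤ : ℕ∞) (ginv i j))
    (hLeft : ∀ q : Pt n, lamInv V (lam L q) = q)
    (hRight : ∀ q : Pt n, lam L (lamInv V q) = q)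
    (hginv : ∀ (q : Pt n) (s k : Fin n), (∑ r, ginv s r q * gdn L r k q) = kron s k)
    (Γ : Conn n)
    (hΓ : ∀ k i j, ContDiff ℝ (⊤ : ℕ∞) (Γ k i j))
    (hΓsym : ∀ (k i j : Fin n) (q : Pt n), Γ k i j q = Γ k j i q)
    (Φ : Fam n) (hΦ : ∀ i, ContDiff ℝ (⊤ : ℕ∞) (Φ i))
    (T : Conn n)
    (hT : ∀ k i j, ContDiff ℝ (⊤ : ℕ∞) (T k i j))
    (hTsym : ∀ (k i j : Fin n) (q : Pt n), T k i j q = T k j i q) :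
    ∀ (q : Pt n) (k : Fin n),
      alphaV L ginv (addT Γ T) Φ k q = alphaV L ginv Γ Φ k q :=
  stmt15_general n L ginv hL hginv Γ hΓ Φ hΦ T hT
end
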